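/- arXiv:2302.12751 — 9 statements merged into one kernel-verified Lean document; each statement's English description precedes it below -/
import Mathlib

section
/- Let F be a field, let n ≥ 2, and fix k ≥ 1. A nonzero matrix A ∈ M_n(F) can be written as A = U + N, where U ∈ M_n(F) is invertible and N ∈ M_n(F) satisfies N^k = 0, if and only if k · rank(A) ≥ n (i.e., the rank of A is at least n/k). -/
open Module Submodule LinearMap
set_option linter.unusedSectionVars false
set_option linter.unusedVariables false
set_option maxHeartbeats 1000000



section aux
variable {F : Type*} [Field F] {V : Type*} [AddCommGroup V] [Module F V]

theorem aux_exists_notMem (P Q : Submodule F V) (hP : P ≠ ⊤) (hQ : Q ≠ ⊤) :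
    ∃ x, x ∉ P ∧ x ∉ Q := by
  have hP' : ∃ p, p ∉ P := by
    by_contra h; push_neg at h; exact hP (eq_top_iff.mpr fun x _ => h x)
  have hQ' : ∃ q, q ∉ Q := by
    by_contra h; push_neg at h; exact hQ (eq_top_iff.mpr fun x _ => h x)
  obtain ⟨p, hp⟩ := hP'
  obtain ⟨q, hq⟩ := hQ'
  by_cases hpQ : p ∈ Q
  · by_cases hqP : q ∈ P
    · refine ⟨p + q, fun h => hp ?_, fun h => hq ?_⟩
      · simpa using P.sub_mem h hqP
      · simpa using Q.sub_mem h hpQ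
    · exact ⟨q, hqP, hq⟩
  · exact ⟨p, hp, hpQ⟩

theorem aux_inter_sup_span (D W : Submodule F V) (x : V) (hx : x ∉ D ⊔ W)
    (hDW : D ⊓ W = ⊥) : (D ⊔ span F {x}) ⊓ W = ⊥ := by
  rw [eq_bot_iff]
  rintro v ⟨hv1, hv2⟩
  obtain ⟨u, hu, w, hw, rfl⟩ := Submodule.mem_sup.mp hv1
  obtain ⟨c, rfl⟩ := Submodule.mem_span_singleton.mp hw
  rcases eq_or_ne c 0 with rfl | hc
  · simp only [zero_smul, add_zero] at hv2 ⊢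
    have : u ∈ D ⊓ W := ⟨hu, hv2⟩
    rw [hDW] at this; exact this
  · exfalso
    apply hx
    have : x = c⁻¹ • ((u + c • x) - u) := by
      rw [add_sub_cancel_left, smul_smul, inv_mul_cancel₀ hc, one_smul]
    rw [this]
    refine Submodule.smul_mem _ _ (Submodule.sub_mem _ ?_ ?_)
    · exact Submodule.mem_sup_right hv2
    · exact Submodule.mem_sup_left hu

variable [FiniteDimensional F V]

theorem aux_ne_top_of_finrank_lt {P : Submodule F V} (h : finrank F P < finrank F V) :
    P ≠ ⊤ := by
  rintro rfl
  rw [finrank_top] at h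
  exact lt_irrefl _ h

theorem aux_avoid (W K : Submodule F V) (d : ℕ)
    (h1 : d + finrank F W ≤ finrank F V) (h2 : d + finrank F K ≤ finrank F V) :
    ∃ D : Submodule F V, finrank F D = d ∧ D ⊓ W = ⊥ ∧ D ⊓ K = ⊥ := by
  induction d with
  | zero => exact ⟨⊥, finrank_bot F V, bot_inf_eq _, bot_inf_eq _⟩
  | succ d ih =>
    obtain ⟨D, hD, hDW, hDK⟩ := ih (by omega) (by omega)
    have hsupW : finrank F ↥(D ⊔ W) < finrank F V :=
      lt_of_le_of_lt (Submodule.finrank_add_le_finrank_add_finrank D W) (by omega)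
    have hsupK : finrank F ↥(D ⊔ K) < finrank F V :=
      lt_of_le_of_lt (Submodule.finrank_add_le_finrank_add_finrank D K) (by omega)
    obtain ⟨x, hxW, hxK⟩ := aux_exists_notMem _ _
      (aux_ne_top_of_finrank_lt hsupW) (aux_ne_top_of_finrank_lt hsupK)
    have hxD : x ∉ D := fun h => hxW (Submodule.mem_sup_left h)
    have hx0 : x ≠ 0 := fun h => hxD (h ▸ D.zero_mem)
    have hDx : D ⊓ span F {x} = ⊥ := by
      rw [eq_bot_iff]
      rintro v ⟨hv1, hv2⟩
      obtain ⟨c, rfl⟩ := Submodule.mem_span_singleton.mp hv2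
      rcases eq_or_ne c 0 with rfl | hc
      · simp
      · exact absurd ((Submodule.smul_mem_iff _ hc).mp hv1) hxD
    refine ⟨D ⊔ span F {x}, ?_, aux_inter_sup_span D W x hxW hDW,
      aux_inter_sup_span D K x hxK hDK⟩
    have := Submodule.finrank_sup_add_finrank_inf_eq D (span F {x})
    rw [hDx, finrank_bot, finrank_span_singleton hx0, hD] at this
    omega

theorem aux_exists_isCompl_ge (W X : Submodule F V) (h : X ⊓ W = ⊥) :
    ∃ D : Submodule F V, X ≤ D ∧ IsCompl W D := by
  obtain ⟨Y, hY⟩ := Submodule.exists_isCompl (X ⊔ W)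
  refine ⟨X ⊔ Y, le_sup_left, ?_, ?_⟩
  · rw [disjoint_def]
    intro v hvW hvXY
    obtain ⟨x, hx, y, hy, rfl⟩ := Submodule.mem_sup.mp hvXY
    have hy' : y ∈ X ⊔ W := by
      have : y = (x + y) - x := by abel
      rw [this]
      exact Submodule.sub_mem _ (Submodule.mem_sup_right hvW) (Submodule.mem_sup_left hx)
    have : y = 0 := (disjoint_def.mp hY.disjoint.symm) y hy hy'
    subst this
    rw [add_zero] at hvW ⊢
    have : x ∈ X ⊓ W := ⟨hx, hvW⟩
    rw [h] at this; exact this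
  · rw [codisjoint_iff]
    have := codisjoint_iff.mp hY.codisjoint
    rw [← this, ← sup_assoc, sup_comm W X]

theorem aux_exists_surjective (V₁ V₂ : Type*) [AddCommGroup V₁] [Module F V₁]
    [AddCommGroup V₂] [Module F V₂] [FiniteDimensional F V₁] [FiniteDimensional F V₂]
    (h : finrank F V₂ ≤ finrank F V₁) : ∃ γ : V₁ →ₗ[F] V₂, Function.Surjective γ := by
  classical
  let b₁ := Module.finBasis F V₁
  let b₂ := Module.finBasis F V₂
  refine ⟨b₁.constr F (fun i => if hi : (i : ℕ) < finrank F V₂ then b₂ ⟨i, hi⟩ else 0), ?_⟩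
  rw [← LinearMap.range_eq_top]
  rw [eq_top_iff, ← b₂.span_eq, Submodule.span_le]
  rintro - ⟨t, rfl⟩
  refine ⟨b₁ ⟨(t : ℕ), lt_of_lt_of_le t.2 h⟩, ?_⟩
  rw [Basis.constr_basis]
  simp

end aux


section aux2
variable {F : Type*} [Field F]

theorem aux_nilpotent_range (j : ℕ) :
    ∀ {V : Type*} [AddCommGroup V] [Module F V] [FiniteDimensional F V]
      (I : Submodule F V),
      finrank F ↥I ≤ j * (finrank F V - finrank F ↥I) →
      ∃ β : V →ₗ[F] V, β ^ (j + 1) = 0 ∧ LinearMap.range β = I := by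
  induction j with
  | zero =>
    intro V _ _ _ I h
    simp only [Nat.zero_mul, Nat.le_zero] at h
    refine ⟨0, by simp, ?_⟩
    rw [LinearMap.range_zero, eq_comm, ← Submodule.finrank_eq_zero (R := F)]
    exact h
  | succ j ih =>
    intro V _ _ _ I h
    set m := finrank F V with hm
    set s := finrank F ↥I with hs
    have hsm : s ≤ m := Submodule.finrank_le I
    by_cases hs0 : s = 0
    · refine ⟨0, by simp [pow_succ], ?_⟩
      rw [LinearMap.range_zero, eq_comm, ← Submodule.finrank_eq_zero (R := F)]
      exact hs0
    set c := m - s with hc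
    set s' := s - c with hs'
    -- choose a submodule I'' of I of finrank s'
    obtain ⟨I'', hI''rank, -, -⟩ := aux_avoid (V := ↥I) ⊥ ⊥ s'
      (by rw [finrank_bot F ↥I]; omega) (by rw [finrank_bot F ↥I]; omega)
    have hIH : finrank F ↥I'' ≤ j * (finrank F ↥I - finrank F ↥I'') := by
      rw [hI''rank, ← hs]
      rw [Nat.succ_mul] at h
      rcases le_or_gt s c with hle | hlt
      · have : s' = 0 := by omega
        simp [this]
      · have h1 : s - s' = c := by omega
        rw [h1]
        omega
    obtain ⟨β', hβ'pow, hβ'range⟩ := ih I'' hIH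
    obtain ⟨G, hG⟩ := Submodule.exists_isCompl I
    obtain ⟨H, hH⟩ := Submodule.exists_isCompl I''
    have hGrank : finrank F ↥G = c := by
      have := Submodule.finrank_add_eq_of_isCompl hG
      rw [← hs, ← hm] at this; omega
    have hHrank : finrank F ↥H = s - s' := by
      have := Submodule.finrank_add_eq_of_isCompl hH
      rw [hI''rank] at this
      have h2 : finrank F ↥I = s := hs.symm
      omega
    obtain ⟨γ, hγ⟩ := aux_exists_surjective (↥G) (↥H) (by rw [hGrank, hHrank]; omega)
    set πI := I.projectionOnto G hG with hπI
    set πG := G.projectionOnto I hG.symm with hπG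
    set β₀ : V →ₗ[F] ↥I := β'.comp πI + (H.subtype.comp γ).comp πG with hβ₀
    set β : V →ₗ[F] V := I.subtype.comp β₀ with hβ
    have key : ∀ i : ↥I, β₀ (I.subtype i) = β' i := by
      intro i
      rw [hβ₀]
      simp only [LinearMap.add_apply, LinearMap.comp_apply, hπI, hπG,
        Submodule.subtype_apply]
      rw [Submodule.linearProjOfIsCompl_apply_left hG i,
        Submodule.linearProjOfIsCompl_apply_right' hG.symm i.2]
      simp
    have hcomm : β.comp I.subtype = I.subtype.comp β' := by
      ext i
      simp only [LinearMap.comp_apply, hβ]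
      rw [key i]
    have hpowcomm : ∀ t : ℕ, (β ^ t).comp I.subtype = I.subtype.comp (β' ^ t) := by
      intro t
      induction t with
      | zero => ext x; simp
      | succ t iht =>
        rw [pow_succ, pow_succ, Module.End.mul_eq_comp, Module.End.mul_eq_comp,
          LinearMap.comp_assoc, hcomm, ← LinearMap.comp_assoc, iht, LinearMap.comp_assoc]
    refine ⟨β, ?_, ?_⟩
    · rw [pow_succ, Module.End.mul_eq_comp, hβ, ← LinearMap.comp_assoc, hpowcomm,
        hβ'pow]
      simp
    · have hrange₀ : LinearMap.range β₀ = ⊤ := by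
        refine le_antisymm le_top ?_
        have hsup : I'' ⊔ H = ⊤ := codisjoint_iff.mp hH.codisjoint
        rw [← hsup]
        refine sup_le ?_ ?_
        · intro y hy
          rw [← hβ'range] at hy
          obtain ⟨i, rfl⟩ := hy
          exact ⟨I.subtype i, key i⟩
        · intro y hy
          obtain ⟨g, hg⟩ := hγ ⟨y, hy⟩
          refine ⟨G.subtype g, ?_⟩
          rw [hβ₀]
          simp only [LinearMap.add_apply, LinearMap.comp_apply, hπI, hπG,
            Submodule.subtype_apply]
          rw [Submodule.linearProjOfIsCompl_apply_right' hG g.2,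
            Submodule.linearProjOfIsCompl_apply_left hG.symm g]
          rw [hg]
          simp
      rw [hβ, LinearMap.range_comp, hrange₀, Submodule.map_top, Submodule.range_subtype]
end aux2


section aux3
variable {F : Type*} [Field F]

theorem aux_main {V : Type*} [AddCommGroup V] [Module F V] [FiniteDimensional F V]
    (T : V →ₗ[F] V) (k : ℕ) (hk : 1 ≤ k)
    (h : finrank F V ≤ k * finrank F (LinearMap.range T)) :
    ∃ S : V →ₗ[F] V, S ^ k = 0 ∧ Function.Bijective (T - S) := by
  classical
  set n := finrank F V with hn
  set W := LinearMap.range T with hW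
  set K := LinearMap.ker T with hK
  set r := finrank F ↥W with hr
  set m := finrank F ↥K with hmdef
  have hrn : r + m = n := T.finrank_range_add_finrank_ker
  rcases eq_or_lt_of_le hk with rfl | hk2
  · -- k = 1 : T is bijective
    have hWtop : W = ⊤ := Submodule.eq_top_of_finrank_eq (by omega)
    have hsurj : Function.Surjective T := by
      rw [← LinearMap.range_eq_top, ← hW, hWtop]
    refine ⟨0, by simp, ?_⟩
    rw [sub_zero]
    exact ⟨LinearMap.injective_iff_surjective.mpr hsurj, hsurj⟩
  obtain ⟨k', rfl⟩ : ∃ k', k = k' + 2 := ⟨k - 2, by omega⟩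
  have hmr : m ≤ (k' + 1) * r := by
    have : (k' + 2) * r = (k' + 1) * r + r := by ring
    omega
  set d₁ := min m r with hd₁
  obtain ⟨D₁, hD₁rank, hD₁W, hD₁K⟩ := aux_avoid W K d₁ (by omega) (by omega)
  obtain ⟨C, hD₁C, hKC⟩ := aux_exists_isCompl_ge K D₁ hD₁K
  obtain ⟨D, hD₁D, hWD⟩ := aux_exists_isCompl_ge W D₁ hD₁W
  have hDrank : finrank F ↥D = m := by
    have := Submodule.finrank_add_eq_of_isCompl hWD
    omega
  set πK := K.projectionOnto C hKC with hπK
  set ψ : ↥D →ₗ[F] ↥K := πK.comp D.subtype with hψ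
  set I := LinearMap.range ψ with hI
  set s := finrank F ↥I with hsdef
  have hψrn : s + finrank F (LinearMap.ker ψ) = m := by
    rw [hsdef, hI]
    rw [← hDrank]
    exact ψ.finrank_range_add_finrank_ker
  have hkerψ : d₁ ≤ finrank F (LinearMap.ker ψ) := by
    have hle : Submodule.comap D.subtype D₁ ≤ LinearMap.ker ψ := by
      intro x hx
      simp only [Submodule.mem_comap] at hx
      rw [LinearMap.mem_ker, hψ, LinearMap.comp_apply, hπK, Submodule.subtype_apply]
      exact Submodule.linearProjOfIsCompl_apply_right' hKC (hD₁C hx)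
    have heq : finrank F ↥(Submodule.comap D.subtype D₁) = d₁ := by
      rw [(Submodule.comapSubtypeEquivOfLe hD₁D).finrank_eq, hD₁rank]
    calc d₁ = finrank F ↥(Submodule.comap D.subtype D₁) := heq.symm
      _ ≤ finrank F (LinearMap.ker ψ) := Submodule.finrank_mono hle
  have hs : s ≤ m - d₁ := by omega
  have hIcond : finrank F ↥I ≤ k' * (finrank F ↥K - finrank F ↥I) := by
    rw [← hsdef, ← hmdef]
    rcases le_or_gt m r with hle | hlt
    · have : s = 0 := by omega
      simp [this]
    · have hd1r : d₁ = r := by omega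
      have h1 : s ≤ k' * r := by
        have : (k' + 1) * r = k' * r + r := by ring
        omega
      have h2 : r ≤ m - s := by omega
      calc s ≤ k' * r := h1
        _ ≤ k' * (m - s) := Nat.mul_le_mul_left _ h2
  obtain ⟨β, hβpow, hβrange⟩ := aux_nilpotent_range k' I hIcond
  -- construct α : K →ₗ D surjective with ψ ∘ α = β
  obtain ⟨Gβ, hGβ⟩ := Submodule.exists_isCompl (LinearMap.ker β)
  obtain ⟨Hψ, hHψ⟩ := Submodule.exists_isCompl (LinearMap.ker ψ)
  have hψH_mem : ∀ x : ↥Hψ, ψ (Hψ.subtype x) ∈ I := fun x => ⟨Hψ.subtype x, rfl⟩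
  set ψH : ↥Hψ →ₗ[F] ↥I := LinearMap.codRestrict I (ψ.comp Hψ.subtype) hψH_mem with hψH
  have hψHinj : Function.Injective ψH := by
    intro x y hxy
    have hx : ψ (Hψ.subtype x) = ψ (Hψ.subtype y) := congrArg Subtype.val hxy
    have hmem : (x : ↥D) - (y : ↥D) ∈ LinearMap.ker ψ := by
      rw [LinearMap.mem_ker, map_sub]
      simpa using sub_eq_zero_of_eq hx
    have hmem2 : (x : ↥D) - (y : ↥D) ∈ Hψ := Hψ.sub_mem x.2 y.2
    have := Submodule.disjoint_def.mp hHψ.disjoint _ hmem hmem2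
    exact Subtype.ext (by rwa [sub_eq_zero] at this)
  have hψHsurj : Function.Surjective ψH := by
    rintro ⟨y, hy⟩
    obtain ⟨d, hd⟩ := hy
    obtain ⟨dk, dh, hdk, hdh, hsum⟩ := Submodule.codisjoint_iff_exists_add_eq.mp hHψ.codisjoint d
    refine ⟨⟨dh, hdh⟩, ?_⟩
    apply Subtype.ext
    show ψ dh = y
    rw [← hd, ← hsum, map_add]
    have : ψ dk = 0 := hdk
    rw [this, zero_add]
  set eψ := LinearEquiv.ofBijective ψH ⟨hψHinj, hψHsurj⟩ with heψ
  have hβI_mem : ∀ x : ↥K, β x ∈ I := fun x => hβrange ▸ LinearMap.mem_range_self β x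
  set βI : ↥K →ₗ[F] ↥I := LinearMap.codRestrict I β hβI_mem with hβI
  have hkerrank : finrank F (LinearMap.ker ψ) ≤ finrank F (LinearMap.ker β) := by
    have h1 := β.finrank_range_add_finrank_ker
    rw [hβrange] at h1
    omega
  obtain ⟨κ, hκ⟩ := aux_exists_surjective (↥(LinearMap.ker β)) (↥(LinearMap.ker ψ)) hkerrank
  set πβ := (LinearMap.ker β).projectionOnto Gβ hGβ with hπβ
  set α : ↥K →ₗ[F] ↥D :=
    (LinearMap.ker ψ).subtype.comp (κ.comp πβ) +
      Hψ.subtype.comp (eψ.symm.toLinearMap.comp βI) with hα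
  have hψα : ∀ x : ↥K, ψ (α x) = β x := by
    intro x
    rw [hα]
    simp only [LinearMap.add_apply, LinearMap.comp_apply, map_add, LinearEquiv.coe_coe]
    have h1 : ψ ((LinearMap.ker ψ).subtype (κ (πβ x))) = 0 := (κ (πβ x)).2
    have h2 : ψ (Hψ.subtype (eψ.symm (βI x))) = β x := by
      have : ψH (eψ.symm (βI x)) = βI x := by
        have := eψ.apply_symm_apply (βI x)
        exact this
      have := congrArg Subtype.val this
      rw [hψH] at this
      simpa [hβI] using this
    rw [h1, h2, zero_add]
  have hαsurj : Function.Surjective α := by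
    intro d
    obtain ⟨dk, dh, hdk, hdh, hsum⟩ := Submodule.codisjoint_iff_exists_add_eq.mp hHψ.codisjoint d
    -- hit dh via Gβ
    have hiI : ((eψ ⟨dh, hdh⟩ : ↥I) : ↥K) ∈ LinearMap.range β := by
      rw [hβrange]; exact (eψ ⟨dh, hdh⟩).2
    obtain ⟨u, hu⟩ := hiI
    obtain ⟨uk, ug, huk, hug, husum⟩ :=
      Submodule.codisjoint_iff_exists_add_eq.mp hGβ.codisjoint u
    have hβug : β ug = ((eψ ⟨dh, hdh⟩ : ↥I) : ↥K) := by
      rw [← hu, ← husum, map_add]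
      have : β uk = 0 := huk
      rw [this, zero_add]
    obtain ⟨z, hz⟩ := hκ ⟨dk, hdk⟩
    refine ⟨ug + (LinearMap.ker β).subtype z, ?_⟩
    rw [map_add]
    have hαug : α ug = dh := by
      rw [hα]
      simp only [LinearMap.add_apply, LinearMap.comp_apply, LinearEquiv.coe_coe]
      have hπug : πβ ug = 0 := by
        rw [hπβ]
        exact Submodule.linearProjOfIsCompl_apply_right' hGβ hug
      have hβIug : βI ug = eψ ⟨dh, hdh⟩ := Subtype.ext (by
        show β ug = _
        rw [hβug])
      rw [hπug, map_zero, hβIug, LinearEquiv.symm_apply_apply]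
      simp
    have hαz : α ((LinearMap.ker β).subtype z) = dk := by
      rw [hα]
      simp only [LinearMap.add_apply, LinearMap.comp_apply, LinearEquiv.coe_coe]
      have hπz : πβ ((LinearMap.ker β).subtype z) = z := by
        rw [hπβ]
        exact Submodule.linearProjOfIsCompl_apply_left hGβ z
      have hβz : βI ((LinearMap.ker β).subtype z) = 0 := Subtype.ext (by
        show β ((LinearMap.ker β).subtype z) = 0
        exact z.2)
      rw [hπz, hβz, map_zero, map_zero, add_zero, hz]
      simp
    rw [hαug, hαz, add_comm, hsum]
  -- define S
  set S : V →ₗ[F] V := D.subtype.comp (α.comp πK) with hS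
  have hψcomp : πK.comp D.subtype = ψ := rfl
  have hSpow : ∀ t : ℕ, S ^ (t + 1) = D.subtype.comp ((α.comp (β ^ t)).comp πK) := by
    intro t
    induction t with
    | zero => ext x; simp [hS]
    | succ t iht =>
      rw [pow_succ, iht, hS, Module.End.mul_eq_comp]
      ext x
      simp only [LinearMap.comp_apply]
      congr 1
      have : πK (D.subtype (α (πK x))) = ψ (α (πK x)) := rfl
      rw [this, hψα]
      rw [pow_succ, Module.End.mul_eq_comp]
      simp
  refine ⟨S, ?_, ?_⟩
  · have : k' + 2 = (k' + 1) + 1 := rfl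
    rw [this, hSpow (k' + 1), hβpow]
    simp
  · have hsurj : Function.Surjective (T - S) := by
      rw [← LinearMap.range_eq_top]
      rw [eq_top_iff, ← codisjoint_iff.mp hWD.codisjoint]
      refine sup_le ?_ ?_
      · rintro w ⟨v, rfl⟩
        obtain ⟨vk, vc, hvk, hvc, hsum⟩ :=
          Submodule.codisjoint_iff_exists_add_eq.mp hKC.codisjoint v
        refine ⟨vc, ?_⟩
        rw [LinearMap.sub_apply]
        have hSvc : S vc = 0 := by
          rw [hS]
          simp only [LinearMap.comp_apply]
          have : πK vc = 0 := Submodule.linearProjOfIsCompl_apply_right' hKC hvc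
          rw [this]
          simp
        have hTvk : T vk = 0 := hvk
        rw [hSvc, sub_zero, ← hsum, map_add, hTvk, zero_add]
      · intro d hd
        obtain ⟨u, hu⟩ := hαsurj (-⟨d, hd⟩)
        refine ⟨K.subtype u, ?_⟩
        rw [LinearMap.sub_apply]
        have hTu : T (K.subtype u) = 0 := u.2
        have hSu : S (K.subtype u) = -d := by
          rw [hS]
          simp only [LinearMap.comp_apply]
          have : πK (K.subtype u) = u := Submodule.linearProjOfIsCompl_apply_left hKC u
          rw [this, hu]
          simp
        rw [hTu, hSu, zero_sub, neg_neg]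
    exact ⟨LinearMap.injective_iff_surjective.mpr hsurj, hsurj⟩
end aux3


section aux4
variable {F : Type*} [Field F]

theorem aux_rank_def {n : ℕ} (M : Matrix (Fin n) (Fin n) F) :
    M.rank = finrank F (LinearMap.range M.mulVecLin) := rfl

theorem aux_sylvester {n : ℕ} (B C : Matrix (Fin n) (Fin n) F) :
    B.rank + C.rank ≤ (B * C).rank + n := by
  set f := B.mulVecLin with hf
  set g := C.mulVecLin with hg
  have hfg : (B * C).mulVecLin = f.comp g := Matrix.mulVecLin_mul B C
  set p := LinearMap.range g with hp
  set f' := f.domRestrict p with hf'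
  have hrn : finrank F ↥p = finrank F (LinearMap.range f') + finrank F (LinearMap.ker f') :=
    f'.finrank_range_add_finrank_ker.symm
  have hfrn : finrank F (LinearMap.range f) + finrank F (LinearMap.ker f) = n := by
    have := f.finrank_range_add_finrank_ker
    simpa using this
  have hr1 : finrank F (LinearMap.range f') = (B * C).rank := by
    rw [aux_rank_def, hfg, LinearMap.range_comp, hf', LinearMap.range_domRestrict]
  have hr2 : finrank F (LinearMap.ker f') ≤ finrank F (LinearMap.ker f) := by
    have hle : Submodule.map p.subtype (LinearMap.ker f') ≤ LinearMap.ker f := by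
      rintro x ⟨y, hy, rfl⟩
      exact hy
    calc finrank F (LinearMap.ker f')
        = finrank F ↥(Submodule.map p.subtype (LinearMap.ker f')) :=
          (Submodule.finrank_map_subtype_eq p _).symm
      _ ≤ finrank F (LinearMap.ker f) := Submodule.finrank_mono hle
  have hB : B.rank = finrank F (LinearMap.range f) := rfl
  have hC : C.rank = finrank F ↥p := rfl
  omega

theorem aux_nilrank {n k : ℕ} (N : Matrix (Fin n) (Fin n) F) (hk : 1 ≤ k)
    (hN : N ^ k = 0) : k * N.rank ≤ (k - 1) * n := by
  have key : ∀ i : ℕ, (i + 1) * N.rank ≤ (N ^ (i + 1)).rank + i * n := by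
    intro i
    induction i with
    | zero => simp
    | succ i ih =>
      show (i + 2) * N.rank ≤ (N ^ (i + 2)).rank + (i + 1) * n
      have hsyl := aux_sylvester (N ^ (i + 1)) N
      have hpow : N ^ (i + 1) * N = N ^ (i + 2) := (pow_succ N (i + 1)).symm
      rw [hpow] at hsyl
      have e1 : (i + 2) * N.rank = (i + 1) * N.rank + N.rank := by ring
      have e2 : (i + 1) * n = i * n + n := by ring
      omega
  obtain ⟨k₀, rfl⟩ : ∃ k₀, k = k₀ + 1 := ⟨k - 1, by omega⟩
  have := key k₀
  rw [hN, Matrix.rank_zero] at this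
  simpa using this

theorem aux_rank_add {n : ℕ} (X Y : Matrix (Fin n) (Fin n) F) :
    (X + Y).rank ≤ X.rank + Y.rank := by
  have hle : LinearMap.range (X + Y).mulVecLin ≤
      LinearMap.range X.mulVecLin ⊔ LinearMap.range Y.mulVecLin := by
    rintro - ⟨v, rfl⟩
    rw [Matrix.mulVecLin_add]
    exact Submodule.add_mem_sup (LinearMap.mem_range_self _ v) (LinearMap.mem_range_self _ v)
  calc (X + Y).rank ≤ finrank F ↥(LinearMap.range X.mulVecLin ⊔ LinearMap.range Y.mulVecLin) :=
        Submodule.finrank_mono hle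
    _ ≤ X.rank + Y.rank := Submodule.finrank_add_le_finrank_add_finrank _ _

theorem aux_rank_neg {n : ℕ} (X : Matrix (Fin n) (Fin n) F) : (-X).rank = X.rank := by
  have hneg : (-X).mulVecLin = -X.mulVecLin := by
    ext v i
    simp [Matrix.mulVecLin_apply, Matrix.neg_mulVec]
  rw [aux_rank_def, aux_rank_def, hneg, LinearMap.range_neg]

end aux4

/-- **Main Theorem.** Let `F` be a field, `n ≥ 2`, and fix `k ≥ 1`. A nonzero matrix
`A ∈ Mₙ(F)` can be written as `A = U + N` with `U` invertible and `N ^ k = 0` if and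
only if `k * rank A ≥ n` (i.e. the rank of `A` is at least `n / k`). -/
theorem nonzero_matrix_eq_unit_add_nilpotent_iff_rank
    (F : Type*) [Field F] (n k : ℕ) (hn : 2 ≤ n) (hk : 1 ≤ k)
    (A : Matrix (Fin n) (Fin n) F) (hA : A ≠ 0) :
    (∃ U N : Matrix (Fin n) (Fin n) F, IsUnit U ∧ N ^ k = 0 ∧ A = U + N) ↔
      n ≤ k * A.rank := by
  constructor
  · rintro ⟨U, N, hU, hNk, rfl⟩
    have hUrank : U.rank = n := by
      rw [Matrix.rank_of_isUnit U hU, Fintype.card_fin]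
    have hUle : U.rank ≤ (U + N).rank + N.rank := by
      have : U = (U + N) + (-N) := by abel
      calc U.rank = ((U + N) + (-N)).rank := by rw [← this]
        _ ≤ (U + N).rank + (-N).rank := aux_rank_add _ _
        _ = (U + N).rank + N.rank := by rw [aux_rank_neg]
    have hnil := aux_nilrank N hk hNk
    obtain ⟨k₀, rfl⟩ : ∃ k₀, k = k₀ + 1 := ⟨k - 1, by omega⟩
    simp only [Nat.add_sub_cancel] at hnil
    have h1 : n ≤ (U + N).rank + N.rank := by omega
    have h2 : (k₀ + 1) * n ≤ (k₀ + 1) * ((U + N).rank + N.rank) :=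
      Nat.mul_le_mul_left _ h1
    have h3 : (k₀ + 1) * ((U + N).rank + N.rank)
        = (k₀ + 1) * (U + N).rank + (k₀ + 1) * N.rank := by ring
    have h4 : (k₀ + 1) * n = k₀ * n + n := by ring
    have h5 : (k₀ + 1) * n ≤ (k₀ + 1) * (U + N).rank + k₀ * n := by omega
    omega
  · intro h
    classical
    set T := A.mulVecLin with hT
    have hdim : finrank F (Fin n → F) = n := by simp
    have hcond : finrank F (Fin n → F) ≤ k * finrank F (LinearMap.range T) := by
      rw [hdim]
      exact h
    obtain ⟨S, hSpow, hSbij⟩ := aux_main T k hk hcond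
    have htoLin : ∀ M : Matrix (Fin n) (Fin n) F, Matrix.toLinAlgEquiv' M = M.mulVecLin := by
      intro M
      apply LinearMap.ext
      intro v
      simp [Matrix.toLinAlgEquiv'_apply, Matrix.mulVecLin_apply, Matrix.toLin'_apply]
    set e := (LinearMap.toMatrixAlgEquiv' : ((Fin n → F) →ₗ[F] Fin n → F) ≃ₐ[F] _) with he
    set N := e S with hN
    refine ⟨A - N, N, ?_, ?_, by abel⟩
    · have hTS : IsUnit (T - S) := (Module.End.isUnit_iff _).mpr hSbij
      have heA : e T = A := by
        rw [hT, ← htoLin A, he, ← LinearMap.toMatrixAlgEquiv'_symm]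
        exact AlgEquiv.apply_symm_apply _ A
      have : A - N = e (T - S) := by rw [map_sub, heA, hN]
      rw [this]
      exact hTS.map e
    · rw [hN, ← map_pow, hSpow, map_zero]
end

section
/- Let F be a field, let n ≥ 2, and fix k ≥ 1. If a matrix A ∈ M_n(F) can be written as A = U + N, where U ∈ M_n(F) is invertible and N ∈ M_n(F) satisfies N^k = 0, then k · rank(A) ≥ n. -/
/-!
Since `A = U - (-N)` and `(-N) ^ k = 0`, the telescoping identity
`U ^ k - (-N) ^ k = ∑_{j < k} U ^ j * A * (-N) ^ (k - 1 - j)`, valid without commutativity,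
writes the invertible matrix `U ^ k` as a sum of `k` matrices of rank at most `rank A`.
-/

open Finset

theorem pow_sub_pow_eq_sum_pow_mul_sub_mul_pow {R : Type*} [Ring R] (a b : R) (k : ℕ) :
    a ^ k - b ^ k = ∑ j ∈ range k, a ^ j * (a - b) * b ^ (k - 1 - j) := by
  induction k with
  | zero => simp
  | succ k ih =>
    have hshift : ∀ j ∈ range k, a ^ (j + 1) * (a - b) * b ^ (k + 1 - 1 - (j + 1)) =
        a * (a ^ j * (a - b) * b ^ (k - 1 - j)) := by
      intro j _
      rw [show k + 1 - 1 - (j + 1) = k - 1 - j by omega, pow_succ', mul_assoc, mul_assoc,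
        mul_assoc]
    rw [sum_range_succ', sum_congr rfl hshift, ← mul_sum, ← ih]
    simp only [pow_zero, one_mul, Nat.add_sub_cancel, Nat.sub_zero, pow_succ']
    noncomm_ring

namespace Matrix

variable {m n K : Type*} [Fintype n] [Field K]

theorem rank_add_le (A B : Matrix m n K) : (A + B).rank ≤ A.rank + B.rank := by
  unfold rank
  rw [mulVecLin_add]
  calc Module.finrank K (LinearMap.range (A.mulVecLin + B.mulVecLin))
      ≤ Module.finrank K (LinearMap.range A.mulVecLin ⊔ LinearMap.range B.mulVecLin :
          Submodule K (m → K)) := by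
        apply Submodule.finrank_mono
        rintro _ ⟨x, rfl⟩
        exact Submodule.add_mem_sup ⟨x, rfl⟩ ⟨x, rfl⟩
    _ ≤ _ := Submodule.finrank_add_le_finrank_add_finrank _ _

theorem rank_finsetSum_le {ι : Type*} (s : Finset ι) (A : ι → Matrix m n K) :
    (∑ i ∈ s, A i).rank ≤ ∑ i ∈ s, (A i).rank :=
  sum_hom_rel (r := fun A r ↦ rank A ≤ r) (by simp) fun _ _ _ h ↦
    (rank_add_le _ _).trans (Nat.add_le_add_left h _)

theorem rank_pow_sub_pow_le [DecidableEq n] (A B : Matrix n n K) (k : ℕ) :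
    (A ^ k - B ^ k).rank ≤ k * (A - B).rank := by
  rw [pow_sub_pow_eq_sum_pow_mul_sub_mul_pow]
  calc (∑ j ∈ range k, A ^ j * (A - B) * B ^ (k - 1 - j)).rank
      ≤ ∑ j ∈ range k, (A ^ j * (A - B) * B ^ (k - 1 - j)).rank := rank_finsetSum_le _ _
    _ ≤ ∑ _j ∈ range k, (A - B).rank :=
        sum_le_sum fun _ _ ↦ (rank_mul_le_left _ _).trans (rank_mul_le_right _ _)
    _ = k * (A - B).rank := by rw [sum_const, card_range, smul_eq_mul]

end Matrix

theorem rank_ge_of_eq_unit_add_nilpotent_general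
    (F : Type*) [Field F] (n k : ℕ)
    (A : Matrix (Fin n) (Fin n) F)
    (h : ∃ U N : Matrix (Fin n) (Fin n) F, IsUnit U ∧ N ^ k = 0 ∧ A = U + N) :
    n ≤ k * A.rank := by
  obtain ⟨U, N, hU, hN, rfl⟩ := h
  have hnegN : (-N) ^ k = 0 := by rw [neg_pow, hN, mul_zero]
  calc n = (U ^ k).rank := by rw [Matrix.rank_of_isUnit _ (hU.pow k), Fintype.card_fin]
    _ = (U ^ k - (-N) ^ k).rank := by rw [hnegN, sub_zero]
    _ ≤ k * (U - -N).rank := Matrix.rank_pow_sub_pow_le _ _ _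
    _ = k * (U + N).rank := by rw [sub_neg_eq_add]

/-- If `A ∈ Mₙ(F)` (with `n ≥ 2`, `k ≥ 1`) can be written as `A = U + N` with `U`
invertible and `N ^ k = 0`, then `k * rank A ≥ n`. -/
theorem rank_ge_of_eq_unit_add_nilpotent
    (F : Type*) [Field F] (n k : ℕ) (hn : 2 ≤ n) (hk : 1 ≤ k)
    (A : Matrix (Fin n) (Fin n) F)
    (h : ∃ U N : Matrix (Fin n) (Fin n) F, IsUnit U ∧ N ^ k = 0 ∧ A = U + N) :
    n ≤ k * A.rank :=
  rank_ge_of_eq_unit_add_nilpotent_general F n k A h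
end

section
/- Let F be a field, let n ≥ 2, and fix k ≥ 1. If A ∈ M_n(F) is a nonzero matrix with k · rank(A) ≥ n, then there exist an invertible matrix U ∈ M_n(F) and a matrix N ∈ M_n(F) with N^k = 0 such that A = U + N. -/
open Submodule Module

set_option linter.unusedSectionVars false
set_option linter.unusedVariables false
set_option maxHeartbeats 2000000

section Helpers

variable {F : Type*} [Field F] {V : Type*} [AddCommGroup V] [Module F V]
  [FiniteDimensional F V]

/-- A vector space is not the union of two proper subspaces. -/
lemma aux_exists_notMem_s2 (X Y : Submodule F V) (hX : X ≠ ⊤) (hY : Y ≠ ⊤) :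
    ∃ v : V, v ∉ X ∧ v ∉ Y := by
  obtain ⟨x, hx⟩ : ∃ x, x ∉ X := by
    by_contra h; push_neg at h; exact hX (eq_top_iff'.mpr h)
  obtain ⟨y, hy⟩ : ∃ y, y ∉ Y := by
    by_contra h; push_neg at h; exact hY (eq_top_iff'.mpr h)
  by_cases hxY : x ∉ Y
  · exact ⟨x, hx, hxY⟩
  by_cases hyX : y ∉ X
  · exact ⟨y, hyX, hy⟩
  push_neg at hxY hyX
  refine ⟨x + y, fun h => hx ?_, fun h => hy ?_⟩
  · simpa using X.sub_mem h hyX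
  · simpa using Y.sub_mem h hxY

lemma aux_finrank_lt_top {X : Submodule F V} (h : finrank F X < finrank F V) : X ≠ ⊤ := by
  rintro rfl; simp [finrank_top] at h

lemma aux_finrank_sup_le (X Y : Submodule F V) :
    finrank F ↥(X ⊔ Y) ≤ finrank F X + finrank F Y := by
  have := finrank_sup_add_finrank_inf_eq X Y
  omega

/-- extend a disjoint-from-O subspace by one vector avoiding O -/
lemma aux_extend {Y O : Submodule F V} (hYO : Y ⊓ O = ⊥) {v : V} (hv : v ∉ Y ⊔ O) :
    (Y ⊔ span F {v}) ⊓ O = ⊥ ∧ finrank F ↥(Y ⊔ span F {v}) = finrank F Y + 1 := by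
  have hvY : v ∉ Y := fun h => hv (le_sup_left (α := Submodule F V) h)
  have hv0 : v ≠ 0 := by rintro rfl; exact hvY Y.zero_mem
  have hdisj : Y ⊓ span F {v} = ⊥ := by
    rw [eq_bot_iff]
    rintro x ⟨hxY, hxv⟩
    obtain ⟨a, rfl⟩ := mem_span_singleton.mp hxv
    rcases eq_or_ne a 0 with rfl | ha
    · simp only [smul_zero, zero_smul]; exact zero_mem _
    · exact absurd (by simpa [ha] using Y.smul_mem a⁻¹ hxY : v ∈ Y) hvY
  constructor
  · rw [eq_bot_iff]
    rintro x ⟨hxYv, hxO⟩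
    obtain ⟨y, hy, z, hz, rfl⟩ := mem_sup.mp hxYv
    obtain ⟨a, rfl⟩ := mem_span_singleton.mp hz
    rcases eq_or_ne a 0 with rfl | ha
    · simp only [zero_smul, add_zero] at hxO ⊢
      have : y ∈ Y ⊓ O := ⟨hy, hxO⟩
      rw [hYO] at this; simpa using this
    · exfalso
      apply hv
      have : a • v = (y + a • v) - y := by abel
      have hmem : a • v ∈ Y ⊔ O := by
        rw [this]
        exact sub_mem (le_sup_right (α := Submodule F V) hxO) (le_sup_left (α := Submodule F V) hy)
      have := (Y ⊔ O).smul_mem a⁻¹ hmem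
      simpa [ha] using this
  · have := finrank_sup_add_finrank_inf_eq Y (span F {v})
    rw [hdisj, finrank_span_singleton hv0] at this
    simp at this; omega

/-- Greedy: a subspace of `W` of dimension `j` meeting `O` trivially. -/
lemma aux_greedy1 (W O : Submodule F V) :
    ∀ j : ℕ, finrank F ↥(O ⊓ W) + j ≤ finrank F W →
      ∃ Y ≤ W, finrank F Y = j ∧ Y ⊓ O = ⊥ := by
  intro j
  induction j with
  | zero => intro _; exact ⟨⊥, bot_le, by simp, by simp⟩
  | succ j ih =>
    intro hj
    obtain ⟨Y, hYW, hYrank, hYO⟩ := ih (by omega)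
    have hnle : ¬ W ≤ Y ⊔ O := by
      intro hle
      have heq : W ⊓ O ⊔ Y = W ⊓ (O ⊔ Y) := inf_sup_assoc_of_le O hYW
      have h1 : W = W ⊓ O ⊔ Y := by
        rw [heq, inf_eq_left.mpr (by rwa [sup_comm])]
      have h2 : finrank F W ≤ finrank F ↥(W ⊓ O) + finrank F Y := by
        conv_lhs => rw [h1]
        exact aux_finrank_sup_le _ _
      rw [inf_comm] at h2
      omega
    obtain ⟨v, hvW, hvYO⟩ := SetLike.not_le_iff_exists.mp hnle
    obtain ⟨h1, h2⟩ := aux_extend hYO hvYO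
    exact ⟨Y ⊔ span F {v}, sup_le hYW (span_le.mpr (by simpa using hvW)), by omega, h1⟩

/-- Greedy: a subspace of dimension `j` meeting both `O₁`, `O₂` trivially. -/
lemma aux_greedy2 (O₁ O₂ : Submodule F V) :
    ∀ j : ℕ, finrank F O₁ + j ≤ finrank F V → finrank F O₂ + j ≤ finrank F V →
      ∃ Y : Submodule F V, finrank F Y = j ∧ Y ⊓ O₁ = ⊥ ∧ Y ⊓ O₂ = ⊥ := by
  intro j
  induction j with
  | zero => intro _ _; exact ⟨⊥, by simp, by simp, by simp⟩
  | succ j ih =>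
    intro h1 h2
    obtain ⟨Y, hYrank, hY1, hY2⟩ := ih (by omega) (by omega)
    have p1 : (Y ⊔ O₁) ≠ ⊤ := by
      apply aux_finrank_lt_top
      have := aux_finrank_sup_le Y O₁
      have hle := finrank_le (R := F) (M := V)
      omega
    have p2 : (Y ⊔ O₂) ≠ ⊤ := by
      apply aux_finrank_lt_top
      have := aux_finrank_sup_le Y O₂
      omega
    obtain ⟨v, hv1, hv2⟩ := aux_exists_notMem_s2 _ _ p1 p2
    obtain ⟨q1, q2⟩ := aux_extend hY1 hv1
    obtain ⟨q3, _⟩ := aux_extend hY2 hv2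
    exact ⟨Y ⊔ span F {v}, by omega, q1, q3⟩

lemma aux_fam (X : Submodule F V) (d : ℕ) (h : finrank F X = d) :
    ∃ x : Fin d → V, LinearIndependent F x ∧ ∀ i, x i ∈ X := by
  let bX := Module.finBasis F ↥X
  refine ⟨fun i => (bX (Fin.cast h.symm i) : V), ?_, fun i => (bX _).2⟩
  exact (bX.linearIndependent.map' X.subtype (ker_subtype X)).comp _ (Fin.cast_injective _)

lemma aux_key (K R : Submodule F V) (n m r c : ℕ) (hm : finrank F K = m)
    (hr : finrank F R = r) (hn : finrank F V = n) (hn' : n = m + r)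
    (hc : c = min m r) (hm1 : 1 ≤ m) (hr1 : 1 ≤ r) :
    ∃ (b : Fin n → V) (MC : Submodule F V), LinearIndependent F b ∧
      (∀ t : Fin n, (t : ℕ) < m → b t ∈ K) ∧
      (∀ t : Fin n, c ≤ (t : ℕ) → (t : ℕ) < m + c → b t ∈ MC) ∧ MC ⊓ R = ⊥ := by
  have hcm : c ≤ m := by omega
  have hcr : c ≤ r := by omega
  have hκ : finrank F ↥(R ⊓ K) ≤ c := by
    have h1 : finrank F ↥(R ⊓ K) ≤ m := hm ▸ Submodule.finrank_mono inf_le_right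
    have h2 : finrank F ↥(R ⊓ K) ≤ r := hr ▸ Submodule.finrank_mono inf_le_left
    omega
  -- M' : middles space
  obtain ⟨M', hM'K, hM'rank, hM'R⟩ := aux_greedy1 K R (m - c) (by omega)
  -- X : starts space
  obtain ⟨X, hXK, hXrank, hXM'⟩ := aux_greedy1 K M' c
    (by rw [inf_eq_left.mpr hM'K]; omega)
  -- C : ends space
  obtain ⟨C, hCrank, hCMR, hCK⟩ := aux_greedy2 (M' ⊔ R) K c
    (by have := aux_finrank_sup_le M' R; omega) (by omega)
  -- H : heads space
  obtain ⟨H, hHrank, hHKC, -⟩ := aux_greedy2 (K ⊔ C) (K ⊔ C) (r - c)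
    (by have := aux_finrank_sup_le K C; omega) (by have := aux_finrank_sup_le K C; omega)
  -- families
  obtain ⟨xf, hxf, hxfm⟩ := aux_fam X c hXrank
  obtain ⟨mf, hmf, hmfm⟩ := aux_fam M' (m - c) hM'rank
  obtain ⟨cf, hcf, hcfm⟩ := aux_fam C c hCrank
  obtain ⟨hf, hhf, hhfm⟩ := aux_fam H (r - c) hHrank
  -- disjointness facts
  have dXM : Disjoint X M' := disjoint_iff.mpr hXM'
  have dCH : Disjoint C H := by
    rw [disjoint_iff, eq_bot_iff, ← hHKC]
    exact le_inf (inf_le_right) (inf_le_left.trans le_sup_right)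
  have dK_CH : Disjoint K (C ⊔ H) := by
    rw [disjoint_iff, eq_bot_iff]
    rintro x ⟨hxK, hxCH⟩
    obtain ⟨cc, hcc, hh, hhh, rfl⟩ := mem_sup.mp hxCH
    have h1 : hh ∈ H ⊓ (K ⊔ C) := ⟨hhh, by
      have : hh = (cc + hh) - cc := by abel
      rw [this]
      exact sub_mem (le_sup_left (α := Submodule F V) hxK)
        (le_sup_right (α := Submodule F V) hcc)⟩
    rw [hHKC] at h1
    simp only [mem_bot] at h1
    subst h1
    have h2 : cc ∈ C ⊓ K := ⟨hcc, by simpa using hxK⟩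
    rw [hCK] at h2
    simp only [mem_bot] at h2
    simp [h2]
  -- the combined family
  set f : (Fin c ⊕ Fin (m - c)) ⊕ (Fin c ⊕ Fin (r - c)) → V :=
    Sum.elim (Sum.elim xf mf) (Sum.elim cf hf) with hfdef
  have hspan1 : span F (Set.range (Sum.elim xf mf)) ≤ K := by
    rw [span_le]; rintro v ⟨i | i, rfl⟩
    · exact hXK (hxfm i)
    · exact hM'K (hmfm i)
  have hspan2 : span F (Set.range (Sum.elim cf hf)) ≤ C ⊔ H := by
    rw [span_le]; rintro v ⟨i | i, rfl⟩
    · exact le_sup_left (α := Submodule F V) (hcfm i)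
    · exact le_sup_right (α := Submodule F V) (hhfm i)
  have hifam : LinearIndependent F f := by
    refine LinearIndependent.sum_type ?_ ?_ (dK_CH.mono hspan1 hspan2)
    · refine LinearIndependent.sum_type hxf hmf (dXM.mono ?_ ?_)
      · rw [span_le]; rintro v ⟨i, rfl⟩; exact hxfm i
      · rw [span_le]; rintro v ⟨i, rfl⟩; exact hmfm i
    · refine LinearIndependent.sum_type hcf hhf (dCH.mono ?_ ?_)
      · rw [span_le]; rintro v ⟨i, rfl⟩; exact hcfm i
      · rw [span_le]; rintro v ⟨i, rfl⟩; exact hhfm i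
  -- index function
  set g : Fin n → (Fin c ⊕ Fin (m - c)) ⊕ (Fin c ⊕ Fin (r - c)) := fun t =>
    if h1 : (t : ℕ) < c then .inl (.inl ⟨t, h1⟩)
    else if h2 : (t : ℕ) < m then .inl (.inr ⟨(t : ℕ) - c, by omega⟩)
    else if h3 : (t : ℕ) < m + c then .inr (.inl ⟨(t : ℕ) - m, by omega⟩)
    else .inr (.inr ⟨(t : ℕ) - (m + c), by have := t.isLt; omega⟩) with hgdef
  have hgeval1 : ∀ (t : Fin n) (h : (t : ℕ) < c), g t = .inl (.inl ⟨t, h⟩) := by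
    intro t h; simp only [hgdef]; rw [dif_pos h]
  have hgeval2 : ∀ (t : Fin n) (h1 : ¬ (t : ℕ) < c) (h2 : (t : ℕ) < m),
      g t = .inl (.inr ⟨(t : ℕ) - c, by omega⟩) := by
    intro t h1 h2; simp only [hgdef]; rw [dif_neg h1, dif_pos h2]
  have hgeval3 : ∀ (t : Fin n) (h1 : ¬ (t : ℕ) < m) (h2 : (t : ℕ) < m + c),
      g t = .inr (.inl ⟨(t : ℕ) - m, by omega⟩) := by
    intro t h1 h2; simp only [hgdef]
    rw [dif_neg (by omega : ¬ (t : ℕ) < c), dif_neg h1, dif_pos h2]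
  have hgeval4 : ∀ (t : Fin n) (h1 : ¬ (t : ℕ) < m + c),
      g t = .inr (.inr ⟨(t : ℕ) - (m + c), by have := t.isLt; omega⟩) := by
    intro t h1; simp only [hgdef]
    rw [dif_neg (by omega : ¬ (t : ℕ) < c), dif_neg (by omega : ¬ (t : ℕ) < m), dif_neg h1]
  have hginj : Function.Injective g := by
    intro s t hst
    have hs := s.isLt
    have ht := t.isLt
    by_cases hs1 : (s : ℕ) < c
    all_goals by_cases hs2 : (s : ℕ) < m
    all_goals by_cases hs3 : (s : ℕ) < m + c
    all_goals by_cases ht1 : (t : ℕ) < c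
    all_goals by_cases ht2 : (t : ℕ) < m
    all_goals by_cases ht3 : (t : ℕ) < m + c
    all_goals (try omega)
    all_goals (
      first
        | rw [hgeval1 s hs1] at hst | rw [hgeval2 s hs1 hs2] at hst
        | rw [hgeval3 s hs2 hs3] at hst | rw [hgeval4 s hs3] at hst)
    all_goals (
      first
        | rw [hgeval1 t ht1] at hst | rw [hgeval2 t ht1 ht2] at hst
        | rw [hgeval3 t ht2 ht3] at hst | rw [hgeval4 t ht3] at hst)
    all_goals
      simp only [Sum.inl.injEq, Sum.inr.injEq, Fin.mk.injEq, reduceCtorEq] at hst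
    all_goals exact Fin.ext (by omega)
  refine ⟨f ∘ g, M' ⊔ C, hifam.comp g hginj, ?_, ?_, ?_⟩
  · intro t htm
    by_cases h1 : (t : ℕ) < c
    · simp only [Function.comp_apply, hgeval1 t h1, hfdef, Sum.elim_inl]
      exact hXK (hxfm _)
    · simp only [Function.comp_apply, hgeval2 t h1 htm, hfdef, Sum.elim_inl, Sum.elim_inr]
      exact hM'K (hmfm _)
  · intro t ht1 ht2
    by_cases h2 : (t : ℕ) < m
    · simp only [Function.comp_apply, hgeval2 t (by omega) h2, hfdef, Sum.elim_inl, Sum.elim_inr]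
      exact le_sup_left (α := Submodule F V) (hmfm _)
    · simp only [Function.comp_apply, hgeval3 t h2 ht2, hfdef, Sum.elim_inl, Sum.elim_inr]
      exact le_sup_right (α := Submodule F V) (hcfm _)
  · rw [eq_bot_iff]
    rintro x ⟨hxMC, hxR⟩
    obtain ⟨μ, hμ, γ, hγ, rfl⟩ := mem_sup.mp hxMC
    have h1 : γ ∈ C ⊓ (M' ⊔ R) := ⟨hγ, by
      have : γ = (μ + γ) - μ := by abel
      rw [this]
      exact sub_mem (le_sup_right (α := Submodule F V) hxR)
        (le_sup_left (α := Submodule F V) hμ)⟩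
    rw [hCMR] at h1
    simp only [mem_bot] at h1
    subst h1
    have h2 : μ ∈ M' ⊓ R := ⟨hμ, by simpa using hxR⟩
    rw [hM'R] at h2
    simp only [mem_bot] at h2
    simp [h2]

end Helpers

/-- If `A ∈ Mₙ(F)` (with `n ≥ 2`, `k ≥ 1`) is a nonzero matrix with `k * rank A ≥ n`,
then there exist an invertible matrix `U` and a matrix `N` with `N ^ k = 0` such that
`A = U + N`. -/
theorem exists_unit_add_nilpotent_of_rank_ge
    (F : Type*) [Field F] (n k : ℕ) (hn : 2 ≤ n) (hk : 1 ≤ k)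
    (A : Matrix (Fin n) (Fin n) F) (hA : A ≠ 0) (hrank : n ≤ k * A.rank) :
    ∃ U N : Matrix (Fin n) (Fin n) F, IsUnit U ∧ N ^ k = 0 ∧ A = U + N := by
  classical
  set Φ : Matrix (Fin n) (Fin n) F ≃ₐ[F] Module.End F (Fin n → F) :=
    Matrix.toLinAlgEquiv' with hΦdef
  have hΦ : ∀ M : Matrix (Fin n) (Fin n) F, Φ M = M.mulVecLin := by
    intro M
    ext v
    simp [hΦdef, Matrix.toLinAlgEquiv'_apply, Matrix.mulVecLin_apply]
  set T : Module.End F (Fin n → F) := Φ A with hT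
  have hrange : LinearMap.range T = LinearMap.range A.mulVecLin := by rw [hT, hΦ]
  have hker : LinearMap.ker T = LinearMap.ker A.mulVecLin := by rw [hT, hΦ]
  have hfinV : finrank F (Fin n → F) = n := by
    rw [Module.finrank_pi]; exact Fintype.card_fin n
  have hrankR : finrank F (LinearMap.range T) = A.rank := by rw [hrange, Matrix.rank]
  have hRN := LinearMap.finrank_range_add_finrank_ker T
  rw [hfinV] at hRN
  by_cases hinv : n ≤ A.rank
  · -- A is already invertible
    have hle : finrank F (LinearMap.range T) ≤ n := by
      have h9 := Submodule.finrank_le (LinearMap.range T)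
      rwa [hfinV] at h9
    have htop : LinearMap.range T = ⊤ :=
      Submodule.eq_top_of_finrank_eq (by rw [hfinV]; omega)
    have hsurj : Function.Surjective T := LinearMap.range_eq_top.mp htop
    have hbij : Function.Bijective T :=
      ⟨LinearMap.injective_iff_surjective.mpr hsurj, hsurj⟩
    have hUT : IsUnit T := (Module.End.isUnit_iff T).mpr hbij
    have hUA : IsUnit A := by
      have h2 := hUT.map Φ.symm
      rwa [hT, AlgEquiv.symm_apply_apply] at h2
    exact ⟨A, 0, hUA, by rw [zero_pow (by omega : k ≠ 0)], by simp⟩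
  · push_neg at hinv
    set r := A.rank with hrdef
    set m := n - r with hmdef
    have hr1 : 1 ≤ r := by
      rcases Nat.eq_zero_or_pos r with h | h
      · rw [h, mul_zero] at hrank; omega
      · exact h
    have hm1 : 1 ≤ m := by omega
    have hk2 : 2 ≤ k := by
      rcases Nat.lt_or_ge k 2 with h | h
      · have hk1 : k = 1 := by omega
        rw [hk1, one_mul] at hrank; omega
      · exact h
    have hmr : n = m + r := by omega
    have hKm : finrank F (LinearMap.ker T) = m := by omega
    set c := min m r with hc
    have hc1 : 1 ≤ c := by omega
    have hcm : c ≤ m := by omega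
    have hcr : c ≤ r := by omega
    have hck : m ≤ (k - 1) * c := by
      rcases le_total m r with h | h
      · have : c = m := by omega
        rw [this]
        calc m = 1 * m := (one_mul m).symm
        _ ≤ (k - 1) * m := Nat.mul_le_mul_right m (by omega)
      · have hcr' : c = r := by omega
        have h2 : (k - 1) * r = k * r - r := Nat.sub_one_mul k r
        rw [hcr', h2]; omega
    obtain ⟨b, MC, hb, hbK, hbMC, hMCR⟩ :=
      aux_key (LinearMap.ker T) (LinearMap.range T) n m r c hKm hrankR hfinV hmr hc hm1 hr1
    haveI : Nonempty (Fin n) := ⟨⟨0, by omega⟩⟩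
    let B : Basis (Fin n) F (Fin n → F) :=
      basisOfLinearIndependentOfCardEqFinrank hb (by rw [hfinV]; exact Fintype.card_fin n)
    have hBb : ⇑B = b := coe_basisOfLinearIndependentOfCardEqFinrank _ _
    have hmcn : m + c ≤ n := by omega
    let S : Module.End F (Fin n → F) :=
      B.constr F (fun t => if h : (t : ℕ) < m then b ⟨(t : ℕ) + c, by omega⟩ else 0)
    have hSb : ∀ t : Fin n,
        S (b t) = if h : (t : ℕ) < m then b ⟨(t : ℕ) + c, by omega⟩ else 0 := by
      intro t
      conv_lhs => rw [← hBb]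
      exact B.constr_basis F _ t
    -- nilpotency
    have hnil : ∀ j : ℕ, ∀ t : Fin n, m ≤ (t : ℕ) + j * c → (S ^ (j + 1)) (b t) = 0 := by
      intro j
      induction j with
      | zero => intro t ht; rw [pow_one, hSb, dif_neg (by omega)]
      | succ j ih =>
        intro t ht
        rw [pow_succ, Module.End.mul_apply, hSb]
        by_cases h : (t : ℕ) < m
        · rw [dif_pos h]
          exact ih _ (by
            simp only [Fin.val_mk]
            have h99 : (j + 1) * c = j * c + c := by ring
            omega)
        · rw [dif_neg h]; exact map_zero _
    have hSk : S ^ k = 0 := by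
      apply B.ext
      intro t
      rw [hBb, LinearMap.zero_apply]
      have hkk : k = (k - 1) + 1 := by omega
      rw [hkk]
      exact hnil (k - 1) t (by have := hck; omega)
    -- the image family z
    set z1 : Fin m → (Fin n → F) := fun s => b ⟨(s : ℕ) + c, by have := s.isLt; omega⟩ with hz1def
    set z2 : Fin r → (Fin n → F) := fun s => T (b ⟨m + (s : ℕ), by have := s.isLt; omega⟩) with hz2def
    set g2 : Fin n → Fin m ⊕ Fin r := fun t =>
      if h : (t : ℕ) < m then .inl ⟨t, h⟩
      else .inr ⟨(t : ℕ) - m, by have := t.isLt; omega⟩ with hg2def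
    set z : Fin n → (Fin n → F) := Sum.elim z1 z2 ∘ g2 with hzdef
    have hTSz : ∀ t : Fin n, (T + S) (b t) = z t := by
      intro t
      rw [LinearMap.add_apply, hSb, hzdef]
      by_cases h : (t : ℕ) < m
      · rw [dif_pos h]
        have h0 : T (b t) = 0 := LinearMap.mem_ker.mp (hbK t h)
        rw [h0, zero_add]
        simp only [Function.comp_apply, hg2def]
        rw [dif_pos h]
        simp only [Sum.elim_inl, hz1def]
      · rw [dif_neg h, add_zero]
        simp only [Function.comp_apply, hg2def]
        rw [dif_neg h]
        simp only [Sum.elim_inr, hz2def]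
        have ht9 : (⟨m + ((t : ℕ) - m), by have := t.isLt; omega⟩ : Fin n) = t := by
          apply Fin.ext
          simp only [Fin.val_mk]
          omega
        exact (congrArg T (congrArg b ht9)).symm
    -- linear independence of z
    have hz1 : LinearIndependent F z1 :=
      hb.comp _ (fun a b hab => by
        simp only [Fin.mk.injEq] at hab
        exact Fin.ext (by omega))
    set w2 : Fin r → (Fin n → F) := fun s => b ⟨m + (s : ℕ), by have := s.isLt; omega⟩ with hw2def
    have hw2 : LinearIndependent F w2 :=
      hb.comp _ (fun a b hab => by
        simp only [Fin.mk.injEq] at hab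
        exact Fin.ext (by omega))
    have hKspan : LinearMap.ker T = span F (Set.range (fun i : Fin m => b ⟨(i : ℕ), by have := i.isLt; omega⟩)) := by
      have hw1 : LinearIndependent F (fun i : Fin m => b ⟨(i : ℕ), by have := i.isLt; omega⟩) :=
        hb.comp _ (fun a b hab => by
          simp only [Fin.mk.injEq] at hab
          exact Fin.ext (by omega))
      have hle : span F (Set.range (fun i : Fin m => b ⟨(i : ℕ), by have := i.isLt; omega⟩))
          ≤ LinearMap.ker T := by
        rw [span_le]
        rintro v ⟨i, rfl⟩
        exact hbK _ (by simp only [Fin.val_mk]; exact i.isLt)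
      have hrank1 := finrank_span_eq_card hw1
      rw [Fintype.card_fin] at hrank1
      exact (eq_of_le_of_finrank_le hle (by omega)).symm
    have hdisj2 : Disjoint (span F (Set.range w2)) (LinearMap.ker T) := by
      rw [hKspan]
      have himg1 : Set.range w2 ⊆ b '' {t : Fin n | m ≤ (t : ℕ)} := by
        rintro v ⟨i, rfl⟩
        exact ⟨_, by simp only [Set.mem_setOf_eq, Fin.val_mk]; omega, rfl⟩
      have himg2 : Set.range (fun i : Fin m => b ⟨(i : ℕ), by have := i.isLt; omega⟩)
          ⊆ b '' {t : Fin n | (t : ℕ) < m} := by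
        rintro v ⟨i, rfl⟩
        exact ⟨_, by simp only [Set.mem_setOf_eq, Fin.val_mk]; exact i.isLt, rfl⟩
      have hd : Disjoint {t : Fin n | m ≤ (t : ℕ)} {t : Fin n | (t : ℕ) < m} := by
        rw [Set.disjoint_iff]
        rintro t ⟨h1, h2⟩
        simp only [Set.mem_setOf_eq] at h1 h2
        omega
      exact ((hb.disjoint_span_image hd).mono (span_mono himg1) (span_mono himg2))
    have hz2 : LinearIndependent F z2 := by
      have := hw2.map (f := T) hdisj2
      exact this
    have hz12 : LinearIndependent F (Sum.elim z1 z2) := by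
      apply LinearIndependent.sum_type hz1 hz2
      have l1 : span F (Set.range z1) ≤ MC := by
        rw [span_le]
        rintro v ⟨s, rfl⟩
        exact hbMC _ (by simp only [Fin.val_mk]; omega) (by simp only [Fin.val_mk]; have := s.isLt; omega)
      have l2 : span F (Set.range z2) ≤ LinearMap.range T := by
        rw [span_le]
        rintro v ⟨s, rfl⟩
        exact ⟨_, rfl⟩
      exact (disjoint_iff.mpr hMCR).mono l1 l2
    have hg2inj : Function.Injective g2 := by
      intro s t hst
      have hs := s.isLt
      have ht := t.isLt
      simp only [hg2def] at hst
      by_cases h1 : (s : ℕ) < m <;> by_cases h2 : (t : ℕ) < m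
      · rw [dif_pos h1, dif_pos h2] at hst
        simp only [Sum.inl.injEq, Fin.mk.injEq] at hst
        exact Fin.ext hst
      · rw [dif_pos h1, dif_neg h2] at hst; exact absurd hst (by simp)
      · rw [dif_neg h1, dif_pos h2] at hst; exact absurd hst (by simp)
      · rw [dif_neg h1, dif_neg h2] at hst
        simp only [Sum.inr.injEq, Fin.mk.injEq] at hst
        exact Fin.ext (by omega)
    have hz : LinearIndependent F z := hz12.comp g2 hg2inj
    -- bijectivity of T + S
    have hinj : Function.Injective (T + S) := by
      rw [← LinearMap.ker_eq_bot (M := Fin n → F)]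
      rw [LinearMap.ker_eq_bot']
      intro x hx
      have hxrep := B.sum_repr x
      have himg : (T + S) x = ∑ i, B.repr x i • z i := by
        conv_lhs => rw [← hxrep]
        rw [map_sum]
        refine Finset.sum_congr rfl (fun i _ => ?_)
        rw [map_smul, hBb, hTSz]
      have hcoef := Fintype.linearIndependent_iff.mp hz (fun i => B.repr x i)
        (by rw [← himg]; exact hx)
      rw [← hxrep]
      simp only [hcoef, zero_smul]
      exact Finset.sum_const_zero
    have hbij : Function.Bijective (T + S) :=
      ⟨hinj, LinearMap.injective_iff_surjective.mp hinj⟩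
    have hUnit : IsUnit (T + S) := (Module.End.isUnit_iff _).mpr hbij
    refine ⟨A + Φ.symm S, -(Φ.symm S), ?_, ?_, by abel⟩
    · have heq : A + Φ.symm S = Φ.symm (T + S) := by
        rw [map_add, hT, AlgEquiv.symm_apply_apply]
      rw [heq]
      exact hUnit.map Φ.symm
    · rw [neg_pow, ← map_pow, hSk, map_zero, mul_zero]
end

section
/- Let F be a field, let k ≥ 2 and n ≥ k + 2, and let A = E_{1,2} ∈ M_n(F) be the matrix unit with a 1 in position (1,2) and 0 elsewhere. Then A cannot be written as A = U + N with U ∈ M_n(F) invertible and N ∈ M_n(F) satisfying N^k = 0. -/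
open LinearMap Module

/-- Kernel dimension is subadditive under composition. -/
lemma finrank_ker_comp_le {K V : Type*} [Field K] [AddCommGroup V] [Module K V]
    [FiniteDimensional K V] (f g : V →ₗ[K] V) :
    finrank K (ker (f ∘ₗ g)) ≤ finrank K (ker f) + finrank K (ker g) := by
  set Kfg := ker (f ∘ₗ g)
  let h : Kfg →ₗ[K] V := g ∘ₗ Kfg.subtype
  have hrange : range h ≤ ker f := by
    rintro _ ⟨⟨x, hx⟩, rfl⟩
    exact hx
  have hkerinj : Function.Injective
      ((Kfg.subtype ∘ₗ (ker h).subtype).codRestrict (ker g) (by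
        rintro ⟨⟨x, hx⟩, hx2⟩
        simpa [h] using hx2)) := by
    rw [← LinearMap.ker_eq_bot, LinearMap.ker_codRestrict, LinearMap.ker_eq_bot]
    exact (Submodule.injective_subtype _).comp (Submodule.injective_subtype _)
  have h1 : finrank K (range h) ≤ finrank K (ker f) := Submodule.finrank_mono hrange
  have h2 : finrank K (ker h) ≤ finrank K (ker g) :=
    LinearMap.finrank_le_finrank_of_injective hkerinj
  have h3 := LinearMap.finrank_range_add_finrank_ker h
  omega

lemma finrank_ker_pow_le {K V : Type*} [Field K] [AddCommGroup V] [Module K V]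
    [FiniteDimensional K V] (f : V →ₗ[K] V) (k : ℕ) :
    finrank K (ker (f ^ k)) ≤ k * finrank K (ker f) := by
  induction k with
  | zero => simp [LinearMap.ker_eq_bot_of_injective, Module.End.one_eq_id]
  | succ m ih =>
    have : (f ^ (m + 1) : V →ₗ[K] V) = f ∘ₗ (f ^ m) := by
      rw [pow_succ']; rfl
    rw [this]
    calc finrank K (ker (f ∘ₗ f ^ m)) ≤ finrank K (ker f) + finrank K (ker (f ^ m)) :=
          finrank_ker_comp_le f (f ^ m)
      _ ≤ finrank K (ker f) + m * finrank K (ker f) := by omega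
      _ = (m + 1) * finrank K (ker f) := by ring

/-- Let `k ≥ 2` and `n ≥ k + 2`, and let `A = E₁₂ ∈ Mₙ(F)` be the matrix unit with a `1`
in position `(1,2)` (positions `0`, `1` in `0`-based indexing) and `0` elsewhere. Then `A`
cannot be written as `A = U + N` with `U` invertible and `N ^ k = 0`. -/
theorem stdBasisMatrix_not_unit_add_nilpotent
    (F : Type*) [Field F] (n k : ℕ) (hk : 2 ≤ k) (hn : k + 2 ≤ n) :
    ¬ ∃ U N : Matrix (Fin n) (Fin n) F, IsUnit U ∧ N ^ k = 0 ∧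
      Matrix.single (⟨0, by omega⟩ : Fin n) (⟨1, by omega⟩ : Fin n) (1 : F)
        = U + N := by
  rintro ⟨U, N, hU, hNk, hA⟩
  set f : (Fin n → F) →ₗ[F] (Fin n → F) := Matrix.toLinAlgEquiv' N with hf
  -- ker (f^k) = ⊤
  have hfk : f ^ k = 0 := by
    rw [hf, ← map_pow, hNk, map_zero]
  have htop : finrank F (ker (f ^ k)) = n := by
    rw [hfk, LinearMap.ker_zero]
    simp
  have hd : 2 ≤ finrank F (ker f) := by
    have h1 := finrank_ker_pow_le f k
    rw [htop] at h1
    by_contra hlt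
    push_neg at hlt
    interval_cases h : finrank F (ker f) <;> omega
  -- the hyperplane v 1 = 0
  set π : (Fin n → F) →ₗ[F] F := LinearMap.proj (⟨1, by omega⟩ : Fin n) with hπ
  have hπsurj : Function.Surjective π := fun c => ⟨fun _ => c, rfl⟩
  have hH : finrank F (ker π) + 1 = n := by
    have := LinearMap.finrank_range_add_finrank_ker π
    rw [LinearMap.range_eq_top.mpr hπsurj] at this
    simp only [finrank_top, finrank_self] at this
    simp only [Module.finrank_pi, Fintype.card_fin] at this
    omega
  -- intersection is nontrivial
  have hinf : 0 < finrank F ((ker f ⊓ ker π : Submodule F (Fin n → F))) := by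
    have hsum := Submodule.finrank_sup_add_finrank_inf_eq (ker f) (ker π)
    have hle : finrank F ((ker f ⊔ ker π : Submodule F (Fin n → F))) ≤ n := by
      simpa using Submodule.finrank_le (ker f ⊔ ker π)
    omega
  obtain ⟨⟨v, hv⟩, hvne⟩ := Module.finrank_pos_iff_exists_ne_zero.mp hinf
  have hvN : N.mulVec v = 0 := by
    have := hv.1
    simpa [f, Matrix.toLinAlgEquiv'_apply] using this
  have hv1 : v ⟨1, by omega⟩ = 0 := hv.2
  have hvz : v ≠ 0 := by
    intro h; apply hvne; ext; simp [h]
  -- U.mulVec v = 0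
  have hUv : U.mulVec v = 0 := by
    have h1 : (U + N).mulVec v = U.mulVec v + N.mulVec v := Matrix.add_mulVec _ _ _
    rw [← hA, hvN, add_zero] at h1
    rw [← h1]
    ext i
    simp only [Matrix.mulVec, Matrix.single, dotProduct, Matrix.of_apply]
    rw [Finset.sum_eq_single (⟨1, by omega⟩ : Fin n)]
    · simp [hv1]
    · intro b _ hb; simp [hb.symm]
    · simp
  -- contradiction with invertibility
  apply hvz
  calc v = (1 : Matrix (Fin n) (Fin n) F).mulVec v := by simp
    _ = ((↑hU.unit⁻¹ : Matrix (Fin n) (Fin n) F) * U).mulVec v := by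
        rw [hU.val_inv_mul]
    _ = (↑hU.unit⁻¹ : Matrix (Fin n) (Fin n) F).mulVec (U.mulVec v) :=
        (Matrix.mulVec_mulVec _ _ _).symm
    _ = 0 := by rw [hUv]; simp
end

section
/- Let F be a field, let n ≥ 2, and fix k with 2 ≤ k ≤ n. For each pair 1 ≤ r < s ≤ n with s + k − 2 ≤ n, the matrix N_{r,s,k} ∈ M_n(F) has rank equal to k − 1 and is nilpotent of index exactly k (i.e., N_{r,s,k}^k = 0 but N_{r,s,k}^{k−1} ≠ 0). -/
/-- `Eunit F n a b` is the `n × n` matrix unit `E_{a,b}` over `F`, in **1-based**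
indexing: it has a `1` in row `a`, column `b` (`1 ≤ a, b ≤ n`) and `0` elsewhere. -/
def Eunit (F : Type*) [Field F] (n a b : ℕ) : Matrix (Fin n) (Fin n) F :=
  Matrix.of fun i j => if (i : ℕ) + 1 = a ∧ (j : ℕ) + 1 = b then 1 else 0

/-- The matrix `N_{r,s,k} = E_{r,r} + E_{s,r} - E_{r,s+k-2} - ∑_{i=0}^{k-2} E_{s,s+i}
+ ∑_{i=0}^{k-3} E_{s+i+1,s+i} ∈ Mₙ(F)`, in 1-based indexing. -/
def Nrsk (F : Type*) [Field F] (n r s k : ℕ) : Matrix (Fin n) (Fin n) F :=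
  Eunit F n r r + Eunit F n s r - Eunit F n r (s + k - 2)
    - ∑ i ∈ Finset.range (k - 1), Eunit F n s (s + i)
    + ∑ i ∈ Finset.range (k - 2), Eunit F n (s + i + 1) (s + i)

open Matrix Finset

namespace NrskProof

variable {F : Type*} [Field F]

lemma Eunit_mulVec {n : ℕ} (i j : Fin n) (x : Fin n → F) :
    Eunit F n ((i:ℕ)+1) ((j:ℕ)+1) *ᵥ x = Pi.single i (x j) := by
  funext l
  classical
  simp only [Eunit, Matrix.mulVec, dotProduct, Matrix.of_apply]
  rw [Finset.sum_eq_single j]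
  · simp [Pi.single_apply, Fin.ext_iff, eq_comm]
  · intro c _ hc
    simp [Fin.ext_iff, (by simpa [Fin.ext_iff] using hc : ¬ ((c:ℕ) = (j:ℕ)))]
  · simp

lemma sum_mulVec {n : ℕ} {ι : Type*} (s : Finset ι) (M : ι → Matrix (Fin n) (Fin n) F)
    (x : Fin n → F) : (∑ i ∈ s, M i) *ᵥ x = ∑ i ∈ s, M i *ᵥ x := by
  classical
  induction s using Finset.induction with
  | empty => simp
  | insert _ _ hns ih => rw [Finset.sum_insert hns, Finset.sum_insert hns, Matrix.add_mulVec, ih]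

def B (n b m : ℕ) (h : b + m + 1 ≤ n) (t : ℕ) : Fin n := ⟨b + min t m, by omega⟩

lemma B_coe {n b m : ℕ} (h : b + m + 1 ≤ n) {t : ℕ} (ht : t ≤ m) :
    (B n b m h t : ℕ) = b + t := by simp [B, Nat.min_eq_left ht]

variable {n a b m : ℕ}

lemma N_mulVec (hab : a < b) (h : b + m + 1 ≤ n) (x : Fin n → F) :
    Nrsk F n (a+1) (b+1) (m+2) *ᵥ x =
      Pi.single (⟨a, by omega⟩ : Fin n) (x ⟨a, by omega⟩)
      + Pi.single (B n b m h 0) (x ⟨a, by omega⟩)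
      - Pi.single (⟨a, by omega⟩ : Fin n) (x (B n b m h m))
      - ∑ t ∈ Finset.range (m+1), Pi.single (B n b m h 0) (x (B n b m h t))
      + ∑ t ∈ Finset.range m, Pi.single (B n b m h (t+1)) (x (B n b m h t)) := by
  have ha : a < n := by omega
  have hB0 : (B n b m h 0 : ℕ) = b := B_coe h (Nat.zero_le m)
  have hBm : (B n b m h m : ℕ) = b + m := B_coe h le_rfl
  have e1 : Eunit F n (a+1) (a+1) *ᵥ x
      = Pi.single (⟨a, ha⟩ : Fin n) (x ⟨a, ha⟩) := Eunit_mulVec ⟨a, ha⟩ ⟨a, ha⟩ x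
  have e2 := Eunit_mulVec (B n b m h 0) (⟨a, ha⟩ : Fin n) x
  rw [hB0] at e2
  have e3 := Eunit_mulVec (⟨a, ha⟩ : Fin n) (B n b m h m) x
  rw [hBm] at e3
  have e4 : (∑ t ∈ Finset.range (m+1), Eunit F n (b+1) (b+1+t)) *ᵥ x
      = ∑ t ∈ Finset.range (m+1), Pi.single (B n b m h 0) (x (B n b m h t)) := by
    rw [sum_mulVec]
    refine Finset.sum_congr rfl fun t ht => ?_
    have ht' : t ≤ m := by have := Finset.mem_range.mp ht; omega
    have e := Eunit_mulVec (B n b m h 0) (B n b m h t) x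
    rw [hB0, B_coe h ht'] at e
    rw [show b + 1 + t = b + t + 1 by omega, e]
  have e5 : (∑ t ∈ Finset.range m, Eunit F n (b+1+t+1) (b+1+t)) *ᵥ x
      = ∑ t ∈ Finset.range m, Pi.single (B n b m h (t+1)) (x (B n b m h t)) := by
    rw [sum_mulVec]
    refine Finset.sum_congr rfl fun t ht => ?_
    have ht' : t < m := Finset.mem_range.mp ht
    have e := Eunit_mulVec (B n b m h (t+1)) (B n b m h t) x
    rw [B_coe h (by omega : t+1 ≤ m), B_coe h (le_of_lt ht')] at e
    rw [show b + 1 + t + 1 = b + (t+1) + 1 by omega, show b + 1 + t = b + t + 1 by omega, e]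
  show (Eunit F n (a+1) (a+1) + Eunit F n (b+1) (a+1) - Eunit F n (a+1) ((b+1) + (m+2) - 2)
      - ∑ t ∈ Finset.range ((m+2) - 1), Eunit F n (b+1) ((b+1) + t)
      + ∑ t ∈ Finset.range ((m+2) - 2), Eunit F n ((b+1) + t + 1) ((b+1) + t)) *ᵥ x = _
  rw [show (b+1) + (m+2) - 2 = b + m + 1 by omega, show (m+2) - 1 = m + 1 by omega,
    show (m+2) - 2 = m by omega]
  rw [Matrix.add_mulVec, Matrix.sub_mulVec, Matrix.sub_mulVec, Matrix.add_mulVec]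
  rw [e1, e2, e3, e4, e5]


lemma seval {n : ℕ} (i j : Fin n) : (Pi.single j (1:F) : Fin n → F) i = if (i:ℕ) = (j:ℕ) then 1 else 0 := by
  rw [Pi.single_apply]
  simp [Fin.ext_iff]

lemma N_col_a (hab : a < b) (h : b + m + 1 ≤ n) :
    Nrsk F n (a+1) (b+1) (m+2) *ᵥ Pi.single (⟨a, by omega⟩ : Fin n) 1
      = Pi.single (⟨a, by omega⟩ : Fin n) 1 + Pi.single (B n b m h 0) 1 := by
  rw [N_mulVec hab h]
  have z1 : ∀ t, t ≤ m → (Pi.single (⟨a, by omega⟩ : Fin n) (1:F) : Fin n → F) (B n b m h t) = 0 := by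
    intro t ht
    rw [seval, if_neg]
    rw [B_coe h ht]; first | omega | (simp only [Fin.val_mk]; omega)
  rw [Finset.sum_eq_zero (fun t ht => by
    rw [z1 t (by have := Finset.mem_range.mp ht; omega), Pi.single_zero]),
    Finset.sum_eq_zero (fun t ht => by
    rw [z1 t (by have := Finset.mem_range.mp ht; omega), Pi.single_zero])]
  rw [seval, if_pos rfl, z1 m le_rfl]
  simp only [Pi.single_zero]
  abel

lemma N_col_bt (hab : a < b) (h : b + m + 1 ≤ n) {t₀ : ℕ} (ht₀ : t₀ < m) :
    Nrsk F n (a+1) (b+1) (m+2) *ᵥ Pi.single (B n b m h t₀) 1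
      = Pi.single (B n b m h (t₀+1)) 1 - Pi.single (B n b m h 0) 1 := by
  rw [N_mulVec hab h]
  have za : (Pi.single (B n b m h t₀) (1:F) : Fin n → F) (⟨a, by omega⟩ : Fin n) = 0 := by
    rw [seval, if_neg]
    simp only []
    rw [B_coe h (le_of_lt ht₀)]; first | omega | (simp only [Fin.val_mk]; omega)
  have zb : ∀ t, t ≤ m → t ≠ t₀ → (Pi.single (B n b m h t₀) (1:F) : Fin n → F) (B n b m h t) = 0 := by
    intro t ht hne
    rw [seval, if_neg]
    rw [B_coe h ht, B_coe h (le_of_lt ht₀)]; first | omega | (simp only [Fin.val_mk]; omega)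
  have ze : (Pi.single (B n b m h t₀) (1:F) : Fin n → F) (B n b m h t₀) = 1 := by
    rw [seval, if_pos rfl]
  rw [Finset.sum_eq_single t₀ (fun t ht hne => by
      rw [zb t (by have := Finset.mem_range.mp ht; omega) hne, Pi.single_zero])
    (fun hmem => absurd (Finset.mem_range.mpr (by omega)) hmem)]
  rw [Finset.sum_eq_single t₀ (fun t ht hne => by
      rw [zb t (by have := Finset.mem_range.mp ht; omega) hne, Pi.single_zero])
    (fun hmem => absurd (Finset.mem_range.mpr ht₀) hmem)]
  rw [za, zb m le_rfl (by omega), ze]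
  simp only [Pi.single_zero]
  abel

lemma N_col_bm (hab : a < b) (h : b + m + 1 ≤ n) :
    Nrsk F n (a+1) (b+1) (m+2) *ᵥ Pi.single (B n b m h m) 1
      = -Pi.single (⟨a, by omega⟩ : Fin n) 1 - Pi.single (B n b m h 0) 1 := by
  rw [N_mulVec hab h]
  have za : (Pi.single (B n b m h m) (1:F) : Fin n → F) (⟨a, by omega⟩ : Fin n) = 0 := by
    rw [seval, if_neg]
    simp only []
    rw [B_coe h le_rfl]; first | omega | (simp only [Fin.val_mk]; omega)
  have zb : ∀ t, t ≤ m → t ≠ m → (Pi.single (B n b m h m) (1:F) : Fin n → F) (B n b m h t) = 0 := by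
    intro t ht hne
    rw [seval, if_neg]
    rw [B_coe h ht, B_coe h le_rfl]; first | omega | (simp only [Fin.val_mk]; omega)
  have ze : (Pi.single (B n b m h m) (1:F) : Fin n → F) (B n b m h m) = 1 := by
    rw [seval, if_pos rfl]
  rw [Finset.sum_eq_single m (fun t ht hne => by
      rw [zb t (by have := Finset.mem_range.mp ht; omega) hne, Pi.single_zero])
    (fun hmem => absurd (Finset.mem_range.mpr (by omega)) hmem)]
  rw [Finset.sum_eq_zero (fun t ht => by
      rw [zb t (by have := Finset.mem_range.mp ht; omega)
        (by have := Finset.mem_range.mp ht; omega), Pi.single_zero])]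
  rw [za, ze]
  simp only [Pi.single_zero]
  abel

lemma N_col_other (hab : a < b) (h : b + m + 1 ≤ n) (j : Fin n) (hj1 : (j:ℕ) ≠ a)
    (hj2 : ∀ t, t ≤ m → (j:ℕ) ≠ b + t) :
    Nrsk F n (a+1) (b+1) (m+2) *ᵥ Pi.single j 1 = 0 := by
  rw [N_mulVec hab h]
  have za : (Pi.single j (1:F) : Fin n → F) (⟨a, by omega⟩ : Fin n) = 0 := by
    rw [seval, if_neg]
    simp only []
    first | omega | (simp only [Fin.val_mk]; first | omega | (simp only [Fin.val_mk]; omega))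
  have zb : ∀ t, t ≤ m → (Pi.single j (1:F) : Fin n → F) (B n b m h t) = 0 := by
    intro t ht
    rw [seval, if_neg]
    rw [B_coe h ht]
    exact fun e => hj2 t ht e.symm
  rw [Finset.sum_eq_zero (fun t ht => by
    rw [zb t (by have := Finset.mem_range.mp ht; omega), Pi.single_zero]),
    Finset.sum_eq_zero (fun t ht => by
    rw [zb t (by have := Finset.mem_range.mp ht; omega), Pi.single_zero])]
  rw [za, zb m le_rfl]
  simp only [Pi.single_zero]
  abel

lemma N_pow (hab : a < b) (h : b + m + 1 ≤ n) :
    ∀ q ≤ m,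
      (Nrsk F n (a+1) (b+1) (m+2)) ^ (q+1) *ᵥ Pi.single (⟨a, by omega⟩ : Fin n) 1
        = Pi.single (⟨a, by omega⟩ : Fin n) 1 + Pi.single (B n b m h q) 1
      ∧ ∀ t ≤ m, (Nrsk F n (a+1) (b+1) (m+2)) ^ (q+1) *ᵥ Pi.single (B n b m h t) 1
        = if t + q + 1 ≤ m then Pi.single (B n b m h (t+q+1)) 1 - Pi.single (B n b m h q) 1
          else -Pi.single (⟨a, by omega⟩ : Fin n) 1 - Pi.single (B n b m h q) 1 := by
  intro q
  induction q with
  | zero =>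
    intro _
    constructor
    · rw [pow_one]; exact N_col_a hab h
    · intro t ht
      rw [pow_one]
      by_cases htm : t + 0 + 1 ≤ m
      · rw [if_pos htm]
        exact N_col_bt hab h (by omega)
      · rw [if_neg htm]
        have : t = m := by omega
        subst this
        exact N_col_bm hab h
  | succ q ih =>
    intro hq1
    have hq : q ≤ m := by omega
    obtain ⟨ih1, ih2⟩ := ih hq
    have step : ∀ v : Fin n → F,
        (Nrsk F n (a+1) (b+1) (m+2)) ^ (q+1+1) *ᵥ v
          = Nrsk F n (a+1) (b+1) (m+2) *ᵥ ((Nrsk F n (a+1) (b+1) (m+2)) ^ (q+1) *ᵥ v) := by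
      intro v; rw [Matrix.mulVec_mulVec, ← pow_succ']
    constructor
    · rw [step, ih1, Matrix.mulVec_add, N_col_a hab h, N_col_bt hab h (by omega : q < m)]
      abel
    · intro t ht
      rw [step, ih2 t ht]
      by_cases c1 : t + q + 1 ≤ m
      · rw [if_pos c1, Matrix.mulVec_sub]
        by_cases c2 : t + q + 1 + 1 ≤ m
        · rw [if_pos (by omega : t + (q+1) + 1 ≤ m), N_col_bt hab h (by omega : t+q+1 < m),
            N_col_bt hab h (by omega : q < m),
            show t + (q+1) + 1 = t + q + 1 + 1 by omega]
          abel
        · have hm : t + q + 1 = m := by omega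
          rw [if_neg (by omega : ¬ t + (q+1) + 1 ≤ m), hm, N_col_bm hab h,
            N_col_bt hab h (by omega : q < m)]
          abel
      · rw [if_neg c1, if_neg (by omega : ¬ t + (q+1) + 1 ≤ m), Matrix.mulVec_sub,
          Matrix.mulVec_neg, N_col_a hab h, N_col_bt hab h (by omega : q < m)]
        abel

lemma N_pow_k (hab : a < b) (h : b + m + 1 ≤ n) :
    (Nrsk F n (a+1) (b+1) (m+2)) ^ (m+2) = 0 := by
  classical
  have key : ∀ j : Fin n, (Nrsk F n (a+1) (b+1) (m+2)) ^ (m+2) *ᵥ Pi.single j 1 = 0 := by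
    intro j
    by_cases hja : (j:ℕ) = a
    · have hj : j = (⟨a, by omega⟩ : Fin n) := Fin.ext hja
      rw [hj, show m + 2 = (m+1) + 1 from rfl, pow_succ', ← Matrix.mulVec_mulVec,
        (N_pow hab h m le_rfl).1, Matrix.mulVec_add, N_col_a hab h, N_col_bm hab h]
      abel
    · by_cases hjb : b ≤ (j:ℕ) ∧ (j:ℕ) ≤ b + m
      · have ht : (j:ℕ) - b ≤ m := by omega
        have hj : j = B n b m h ((j:ℕ) - b) := Fin.ext (by rw [B_coe h ht]; omega)
        rw [hj, show m + 2 = (m+1) + 1 from rfl, pow_succ', ← Matrix.mulVec_mulVec,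
          (N_pow hab h m le_rfl).2 _ ht, if_neg (by omega), Matrix.mulVec_sub,
          Matrix.mulVec_neg, N_col_a hab h, N_col_bm hab h]
        abel
      · rw [pow_succ, ← Matrix.mulVec_mulVec,
          N_col_other hab h j hja (by intro t htm he; exact hjb ⟨by omega, by omega⟩),
          Matrix.mulVec_zero]
  ext i j
  have := congrFun (key j) i
  rw [Matrix.mulVec_single_one] at this
  simpa [Matrix.transpose_apply] using this

lemma N_pow_k1_ne (hab : a < b) (h : b + m + 1 ≤ n) :
    (Nrsk F n (a+1) (b+1) (m+2)) ^ (m+1) ≠ 0 := by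
  intro h0
  have hm := (N_pow (F:=F) hab h m le_rfl).1
  rw [h0, Matrix.zero_mulVec] at hm
  have := congrFun hm (⟨a, by omega⟩ : Fin n)
  rw [Pi.zero_apply, Pi.add_apply, seval, seval, if_pos rfl,
    if_neg (by rw [B_coe h le_rfl]; simp only [Fin.val_mk]; omega)] at this
  norm_num at this

lemma N_rank (hab : a < b) (h : b + m + 1 ≤ n) :
    (Nrsk F n (a+1) (b+1) (m+2)).rank = m + 1 := by
  classical
  set A : Fin n := (⟨a, by omega⟩ : Fin n) with hA
  set v : Fin (m+1) → (Fin n → F) :=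
    fun i => Pi.single A 1 + Pi.single (B n b m h (i:ℕ)) 1 with hv
  have hvz : ∀ i : Fin (m+1), ∀ x : Fin n, (x:ℕ) ≠ a → (x:ℕ) ≠ b + (i:ℕ) → v i x = 0 := by
    intro i x hx1 hx2
    rw [hv]
    simp only [Pi.add_apply]
    rw [seval, seval, if_neg (by simp only [hA, Fin.val_mk]; omega),
      if_neg (by rw [B_coe h (by omega : (i:ℕ) ≤ m)]; omega)]
    norm_num
  have hli : LinearIndependent F v := by
    rw [Fintype.linearIndependent_iff]
    intro g hg i
    have hgi := congrFun hg (B n b m h (i:ℕ))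
    rw [Finset.sum_apply] at hgi
    have hBi : ((B n b m h (i:ℕ)) : ℕ) = b + (i:ℕ) := B_coe h (by omega)
    rw [Finset.sum_eq_single i ?_ ?_] at hgi
    · rw [Pi.smul_apply, hv] at hgi
      simp only [Pi.add_apply] at hgi
      rw [seval, seval, if_neg (by rw [hBi]; simp only [hA, Fin.val_mk]; omega), if_pos rfl,
        smul_eq_mul, zero_add, mul_one, Pi.zero_apply] at hgi
      exact hgi
    · intro i' _ hne
      rw [Pi.smul_apply, hvz i' _ (by rw [hBi]; omega)
        (by rw [hBi]; intro e; exact hne (Fin.ext (by omega))), smul_zero]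
    · intro hmem; exact absurd (Finset.mem_univ i) hmem
  have hrange : LinearMap.range (Nrsk F n (a+1) (b+1) (m+2)).mulVecLin
      = Submodule.span F (Set.range v) := by
    apply le_antisymm
    · rw [Matrix.range_mulVecLin, Submodule.span_le]
      rintro _ ⟨j, rfl⟩
      rw [show (Nrsk F n (a+1) (b+1) (m+2)).col j = Nrsk F n (a+1) (b+1) (m+2) *ᵥ Pi.single j 1
        from (Matrix.mulVec_single_one _ j).symm]
      by_cases hja : (j:ℕ) = a
      · rw [show j = A from Fin.ext hja, N_col_a hab h]
        exact Submodule.subset_span ⟨(0 : Fin (m+1)), rfl⟩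
      · by_cases hjb : b ≤ (j:ℕ) ∧ (j:ℕ) ≤ b + m
        · have ht : (j:ℕ) - b ≤ m := by omega
          rw [show j = B n b m h ((j:ℕ) - b) from Fin.ext (by rw [B_coe h ht]; omega)]
          by_cases htm : (j:ℕ) - b < m
          · rw [N_col_bt hab h htm,
              show Pi.single (B n b m h ((j:ℕ) - b + 1)) (1:F) - Pi.single (B n b m h 0) 1
                = v (⟨(j:ℕ) - b + 1, by omega⟩ : Fin (m+1)) - v (0 : Fin (m+1)) from by
                  rw [hv]; simp only [Fin.val_mk, Fin.val_zero]; abel]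
            exact sub_mem (Submodule.subset_span ⟨_, rfl⟩) (Submodule.subset_span ⟨_, rfl⟩)
          · rw [show (j:ℕ) - b = m by omega, N_col_bm hab h,
              show -Pi.single A (1:F) - Pi.single (B n b m h 0) 1 = -(v (0 : Fin (m+1))) from by
                rw [hv]; simp only [Fin.val_zero]; abel]
            exact neg_mem (Submodule.subset_span ⟨_, rfl⟩)
        · rw [N_col_other hab h j hja (by intro t htm he; exact hjb ⟨by omega, by omega⟩)]
          exact Submodule.zero_mem _
    · rw [Submodule.span_le]
      rintro _ ⟨i, rfl⟩
      rcases Nat.eq_zero_or_pos (i:ℕ) with hi | hi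
      · refine ⟨Pi.single A 1, ?_⟩
        rw [Matrix.mulVecLin_apply, N_col_a hab h, hv]
        simp only [hi]
        rfl
      · refine ⟨Pi.single A 1 + Pi.single (B n b m h ((i:ℕ) - 1)) 1, ?_⟩
        rw [Matrix.mulVecLin_apply, Matrix.mulVec_add, N_col_a hab h,
          N_col_bt hab h (by omega : (i:ℕ) - 1 < m),
          show (i:ℕ) - 1 + 1 = (i:ℕ) by omega, hv]
        rw [hA]
        abel
  rw [Matrix.rank, hrange, finrank_span_eq_card hli, Fintype.card_fin]

end NrskProof

/-- For `n ≥ 2`, `2 ≤ k ≤ n` and `1 ≤ r < s ≤ n` with `s + k - 2 ≤ n`, the matrix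
`N_{r,s,k} ∈ Mₙ(F)` has rank `k - 1` and is nilpotent of index exactly `k`. -/
theorem Nrsk_rank_and_nilpotence
    (F : Type*) [Field F] (n k r s : ℕ) (hn : 2 ≤ n) (hk : 2 ≤ k) (hkn : k ≤ n)
    (hr : 1 ≤ r) (hrs : r < s) (hsn : s ≤ n) (hskn : s + k - 2 ≤ n) :
    (Nrsk F n r s k).rank = k - 1 ∧
      Nrsk F n r s k ^ k = 0 ∧ Nrsk F n r s k ^ (k - 1) ≠ 0 := by
  obtain ⟨m, rfl⟩ : ∃ m, k = m + 2 := ⟨k - 2, by omega⟩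
  obtain ⟨a, rfl⟩ : ∃ a, r = a + 1 := ⟨r - 1, by omega⟩
  obtain ⟨b, rfl⟩ : ∃ b, s = b + 1 := ⟨s - 1, by omega⟩
  have hab : a < b := by omega
  have h : b + m + 1 ≤ n := by omega
  have hk1 : m + 2 - 1 = m + 1 := by omega
  rw [hk1]
  exact ⟨NrskProof.N_rank hab h, NrskProof.N_pow_k hab h, NrskProof.N_pow_k1_ne hab h⟩
end

section
/- Let F be a field, let n ≥ 2, and fix k with 2 ≤ k ≤ n. For each pair 1 ≤ r < s ≤ n with s + k − 2 ≤ n, the matrix N_{r,s,k} ∈ M_n(F) is similar (conjugate by an invertible matrix) to the matrix N = ∑_{i=1}^{k−1} E_{i+1,i} ∈ M_n(F), i.e., to the matrix consisting of a single nilpotent Jordan block of size k together with n − k zero blocks of size 1. -/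
/-- The matrix `N = ∑_{i=1}^{k-1} E_{i+1,i} ∈ Mₙ(F)` consisting of a single nilpotent
Jordan block of size `k` together with `n - k` zero blocks of size `1`. -/
def singleJordanBlock (F : Type*) [Field F] (n k : ℕ) : Matrix (Fin n) (Fin n) F :=
  ∑ i ∈ Finset.range (k - 1), Eunit F n (i + 2) (i + 1)

/-!
The vectors `e_r, e_r + e_s, e_r + e_{s+1}, …, e_r + e_{s+k-2}` form a Jordan chain of
`N_{r,s,k}`: each is sent to the next one and the last one to `0`, while `N_{r,s,k}` kills every
`e_c` with `c ∉ {r, s, …, s+k-2}`. Taking the chain as the first `k` columns and the remaining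
standard vectors, in any order, as the other columns gives a matrix `Q` with `N_{r,s,k} Q = Q N`.
Reordering the rows of `Q` turns it into the identity plus some `1`s in the first row, so `Q` is
invertible.
-/

open Matrix Finset Equiv

theorem exists_units_eq_inv_mul_mul_of_mul_eq {M : Type*} [Monoid M] {a b q : M} (hq : IsUnit q)
    (h : a * q = q * b) : ∃ P : Mˣ, a = ↑P⁻¹ * b * ↑P :=
  ⟨hq.unit⁻¹, by rw [inv_inv, IsUnit.unit_spec, ← h, mul_assoc, hq.mul_val_inv, mul_one]⟩

theorem Finset.sum_range_ite_add_eq {M : Type*} [AddCommMonoid M] (s c m : ℕ) (f : ℕ → M) :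
    ∑ i ∈ range m, (if s + i = c then f i else 0) =
      if s ≤ c ∧ c < s + m then f (c - s) else 0 := by
  split_ifs with h
  · rw [sum_eq_single_of_mem (c - s) (mem_range.2 (by omega)), if_pos (by omega)]
    intro i _ hi
    rw [if_neg (by omega)]
  · refine sum_eq_zero fun i hi => if_neg ?_
    have := mem_range.1 hi
    omega

-- The standard basis vector `e_a`, indexed from `1` like `Eunit`; it is `0` unless `1 ≤ a ≤ n`.
def evec (R : Type*) [Zero R] [One R] (n a : ℕ) : Fin n → R :=
  fun i => if (i : ℕ) + 1 = a then 1 else 0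

theorem evec_val_succ {R : Type*} [Zero R] [One R] {n : ℕ} (c : Fin n) :
    evec R n ((c : ℕ) + 1) = Pi.single c 1 := by
  ext i
  simp [evec, Pi.single_apply, Fin.ext_iff]

section

variable {F : Type*} [Field F] {n r s k : ℕ}

theorem Eunit_mulVec_evec (a b : ℕ) {c : ℕ} (hc : 1 ≤ c) (hcn : c ≤ n) :
    Eunit F n a b *ᵥ evec F n c = if b = c then evec F n a else 0 := by
  obtain ⟨c, rfl⟩ : ∃ c' : Fin n, c = c' + 1 := ⟨⟨c - 1, by omega⟩, by simp; omega⟩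
  ext i
  rw [evec_val_succ, mulVec_single_one]
  by_cases h : b = c + 1 <;> simp [Eunit, evec, h, eq_comm (a := (c : ℕ) + 1)]

theorem Nrsk_mulVec_evec {c : ℕ} (hc : 1 ≤ c) (hcn : c ≤ n) :
    Nrsk F n r s k *ᵥ evec F n c =
      (if r = c then evec F n r + evec F n s else 0) - (if s + k - 2 = c then evec F n r else 0)
        - (if s ≤ c ∧ c < s + (k - 1) then evec F n s else 0)
        + (if s ≤ c ∧ c < s + (k - 2) then evec F n (c + 1) else 0) := by
  simp only [Nrsk, add_mulVec, sub_mulVec, sum_mulVec, Eunit_mulVec_evec _ _ hc hcn,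
    sum_range_ite_add_eq, ← ite_add_zero]
  exact congrArg _ (ite_congr rfl (fun h => by rw [Nat.add_sub_cancel' h.1]) fun _ => rfl)

variable (F) in
def chainVec (n r s j : ℕ) : Fin n → F :=
  if j = 0 then evec F n r else evec F n (s + j - 1) + evec F n r

theorem Nrsk_mulVec_chainVec (hr : 1 ≤ r) (hrs : r < s) (hk : 2 ≤ k) (hskn : s + k - 2 ≤ n)
    {j : ℕ} (hj : j < k) :
    Nrsk F n r s k *ᵥ chainVec F n r s j = if j + 1 < k then chainVec F n r s (j + 1) else 0 := by
  rcases Nat.eq_zero_or_pos j with rfl | hj0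
  · simp (disch := omega) only [chainVec, if_true, Nrsk_mulVec_evec, if_pos, if_neg]
    rw [Nat.add_sub_cancel, add_comm]
    abel
  · rcases Nat.lt_or_ge (j + 1) k with hjk | hjk
    · simp (disch := omega) only [chainVec, if_true, mulVec_add, Nrsk_mulVec_evec, if_pos, if_neg]
      rw [show s + (j + 1) - 1 = s + j - 1 + 1 by omega]
      abel
    · simp (disch := omega) only [chainVec, if_true, mulVec_add, Nrsk_mulVec_evec, if_pos, if_neg]
      abel

theorem Nrsk_mulVec_evec_eq_zero (hk : 2 ≤ k) {c : ℕ} (hc : 1 ≤ c) (hcn : c ≤ n)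
    (hcr : c ≠ r) (hcs : c < s ∨ s + k - 2 < c) : Nrsk F n r s k *ᵥ evec F n c = 0 := by
  simp (disch := omega) only [Nrsk_mulVec_evec, if_neg]
  simp

theorem singleJordanBlock_mulVec_evec {c : ℕ} (hc : 1 ≤ c) (hcn : c ≤ n) :
    singleJordanBlock F n k *ᵥ evec F n c = if c < k then evec F n (c + 1) else 0 := by
  simp only [singleJordanBlock, sum_mulVec, Eunit_mulVec_evec _ _ hc hcn, add_comm _ 1,
    sum_range_ite_add_eq]
  split_ifs <;> first | rfl | omega | (congr 1; omega)

-- `τ j` (counted from `0`) is the row of the standard vector in column `j` of `Q`; for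
-- `j = 0, 1, …, k-1` these are the rows `r, s, …, s+k-2` (counted from `1`).
def IsChainRelabel (k r s : ℕ) (τ : Perm (Fin n)) : Prop :=
  ∀ j : Fin n, (j : ℕ) < k → (τ j : ℕ) + 1 = if (j : ℕ) = 0 then r else s + j - 1

theorem exists_isChainRelabel (hr : 1 ≤ r) (hrs : r < s) (hkn : k ≤ n)
    (hskn : s + k - 2 ≤ n) :
    ∃ τ : Perm (Fin n), IsChainRelabel k r s τ := by
  let g : Fin k → Fin n := fun j =>
    ⟨if (j : ℕ) = 0 then r - 1 else s + j - 2, by split_ifs <;> omega⟩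
  have hg : Function.Injective g := by
    intro a b h
    simp only [g, Fin.ext_iff] at h ⊢
    split_ifs at h <;> omega
  obtain ⟨τ, hτ⟩ :=
    Perm.exists_extending_pair (Fin.castLE hkn) g (Fin.castLE_injective hkn) hg
  refine ⟨τ, fun j hj => ?_⟩
  have := congrArg Fin.val (hτ ⟨j, hj⟩)
  simp only [Fin.castLE_mk, Fin.eta, g] at this
  split_ifs at this ⊢ <;> omega

namespace IsChainRelabel

variable {τ : Perm (Fin n)}

theorem val_add_one_ne (hτ : IsChainRelabel k r s τ) (hrs : r < s) (hk : 0 < k) {j : Fin n}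
    (hj : (j : ℕ) ≠ 0) : (τ j : ℕ) + 1 ≠ r := by
  intro h
  have h0 := hτ ⟨0, by omega⟩ hk
  rcases Nat.lt_or_ge j k with hjk | hjk
  · have := hτ j hjk
    simp only [hj, if_false] at this
    omega
  · simp only [if_true] at h0
    have := τ.injective (Fin.ext (by omega) : τ j = τ ⟨0, by omega⟩)
    simp [Fin.ext_iff] at this
    omega

theorem val_add_one_not_mem (hτ : IsChainRelabel k r s τ)
    {j : Fin n} (hj : k ≤ j) : (τ j : ℕ) + 1 < s ∨ s + k - 2 < (τ j : ℕ) + 1 := by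
  by_contra! h
  have ht := hτ ⟨(τ j : ℕ) + 2 - s, by omega⟩ (show (τ j : ℕ) + 2 - s < k by omega)
  simp only [show (τ j : ℕ) + 2 - s ≠ 0 by omega, if_false] at ht
  have := τ.injective (Fin.ext (by omega) : τ j = τ ⟨(τ j : ℕ) + 2 - s, by omega⟩)
  simp [Fin.ext_iff] at this
  omega

end IsChainRelabel

variable (F) in
def chainMatrix (k r : ℕ) (τ : Perm (Fin n)) : Matrix (Fin n) (Fin n) F :=
  (Matrix.of fun j =>
    evec F n ((τ j : ℕ) + 1) + if 1 ≤ (j : ℕ) ∧ (j : ℕ) < k then evec F n r else 0)ᵀ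

theorem chainMatrix_mulVec_single (τ : Perm (Fin n)) (j : Fin n) :
    chainMatrix F k r τ *ᵥ Pi.single j 1 =
      evec F n ((τ j : ℕ) + 1) +
        if 1 ≤ (j : ℕ) ∧ (j : ℕ) < k then evec F n r else 0 := by
  rw [mulVec_single_one]
  rfl

theorem chainMatrix_mulVec_single_of_lt {τ : Perm (Fin n)} (hτ : IsChainRelabel k r s τ)
    {j : Fin n} (hj : (j : ℕ) < k) :
    chainMatrix F k r τ *ᵥ Pi.single j 1 = chainVec F n r s j := by
  rw [chainMatrix_mulVec_single, hτ j hj, chainVec]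
  split_ifs <;> first | omega | simp

theorem isUnit_chainMatrix {τ : Perm (Fin n)} (hτ : IsChainRelabel k r s τ) (hrs : r < s)
    (hk : 0 < k) : IsUnit (chainMatrix F k r τ) := by
  have hentry : ∀ i j, (chainMatrix F k r τ).submatrix τ id i j =
      (if i = j then 1 else 0) +
        if 1 ≤ (j : ℕ) ∧ (j : ℕ) < k ∧ (i : ℕ) = 0 then 1 else 0 := by
    intro i j
    have hri : (τ i : ℕ) + 1 = r ↔ (i : ℕ) = 0 :=
      ⟨not_imp_not.1 (hτ.val_add_one_ne hrs hk), fun h => by simpa [h] using hτ i (by omega)⟩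
    simp only [chainMatrix, submatrix_apply, transpose_apply, of_apply, Pi.add_apply, id, evec,
      Nat.add_right_cancel_iff, Fin.val_inj, τ.injective.eq_iff, ite_apply, Pi.zero_apply, hri,
      ← ite_and, and_assoc]
  have hdet : ((chainMatrix F k r τ).submatrix τ id).det = 1 := by
    rw [det_of_isUpperTriangular]
    · refine Finset.prod_eq_one fun i _ => ?_
      rw [hentry, if_pos rfl, if_neg (by omega), add_zero]
    · intro i j hij
      rw [id, id, Fin.lt_def] at hij
      rw [hentry, if_neg (by omega), if_neg (by omega), add_zero]
  rw [det_permute] at hdet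
  exact isUnit_iff_isUnit_det _ |>.2 <| isUnit_of_mul_isUnit_right (hdet ▸ isUnit_one)

theorem Nrsk_mul_chainMatrix {τ : Perm (Fin n)} (hτ : IsChainRelabel k r s τ) (hr : 1 ≤ r)
    (hrs : r < s) (hk : 2 ≤ k) (hskn : s + k - 2 ≤ n) :
    Nrsk F n r s k * chainMatrix F k r τ = chainMatrix F k r τ * singleJordanBlock F n k := by
  refine ext_of_mulVec_single fun j => ?_
  have hJ : singleJordanBlock F n k *ᵥ Pi.single j 1 =
      if (j : ℕ) + 1 < k then evec F n ((j : ℕ) + 1 + 1) else 0 := by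
    rw [← evec_val_succ, singleJordanBlock_mulVec_evec (by omega) j.isLt]
  rw [← mulVec_mulVec, ← mulVec_mulVec, hJ]
  rcases lt_or_ge (j : ℕ) k with hj | hj
  · rw [chainMatrix_mulVec_single_of_lt hτ hj, Nrsk_mulVec_chainVec hr hrs hk hskn hj]
    split_ifs with h
    · rw [evec_val_succ (⟨(j : ℕ) + 1, by omega⟩ : Fin n),
        chainMatrix_mulVec_single_of_lt hτ h]
    · rw [mulVec_zero]
  · rw [if_neg (by omega), mulVec_zero, chainMatrix_mulVec_single, if_neg (by omega), add_zero,
      Nrsk_mulVec_evec_eq_zero hk (by omega) (by omega)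
        (hτ.val_add_one_ne hrs (by omega) (by omega)) (hτ.val_add_one_not_mem hj)]

end

theorem Nrsk_similar_singleJordanBlock_general
    (F : Type*) [Field F] (n k r s : ℕ) (hk : 2 ≤ k) (hkn : k ≤ n)
    (hr : 1 ≤ r) (hrs : r < s) (hskn : s + k - 2 ≤ n) :
    ∃ P : (Matrix (Fin n) (Fin n) F)ˣ,
      Nrsk F n r s k = (↑P⁻¹ : Matrix (Fin n) (Fin n) F) * singleJordanBlock F n k * (↑P : Matrix (Fin n) (Fin n) F) := by
  obtain ⟨τ, hτ⟩ := exists_isChainRelabel hr hrs hkn hskn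
  exact exists_units_eq_inv_mul_mul_of_mul_eq (isUnit_chainMatrix hτ hrs (by omega))
    (Nrsk_mul_chainMatrix hτ hr hrs hk hskn)

/-- For `n ≥ 2`, `2 ≤ k ≤ n` and `1 ≤ r < s ≤ n` with `s + k - 2 ≤ n`, the matrix
`N_{r,s,k} ∈ Mₙ(F)` is similar (conjugate by an invertible matrix) to the matrix
`N = ∑_{i=1}^{k-1} E_{i+1,i}`, a single nilpotent Jordan block of size `k` together
with `n - k` zero blocks of size `1`. -/
theorem Nrsk_similar_singleJordanBlock
    (F : Type*) [Field F] (n k r s : ℕ) (hn : 2 ≤ n) (hk : 2 ≤ k) (hkn : k ≤ n)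
    (hr : 1 ≤ r) (hrs : r < s) (hsn : s ≤ n) (hskn : s + k - 2 ≤ n) :
    ∃ P : (Matrix (Fin n) (Fin n) F)ˣ,
      Nrsk F n r s k = (↑P⁻¹ : Matrix (Fin n) (Fin n) F) * singleJordanBlock F n k * (↑P : Matrix (Fin n) (Fin n) F) :=
  Nrsk_similar_singleJordanBlock_general F n k r s hk hkn hr hrs hskn
end

section
/- Let F be a field, let n ≥ 2, and fix k ≥ 1. Let q(x) = x^t + a_{t−1}x^{t−1} + ⋯ + a_0 ∈ F[x] be a monic polynomial of degree t with q(0) = a_0 ≠ 0, and let B ∈ M_n(F) be the block-diagonal matrix whose top-left t × t block is the companion matrix C(q) and whose remaining (n−t) × (n−t) block is zero. If n − t ≤ t(k − 1), then there exists a matrix N_B ∈ M_n(F) with N_B^k = 0 such that B + N_B is invertible. -/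
/-!
Let `G` be the shift `e_j ↦ e_{j+t}`. The hypothesis says `n ≤ k t`, so `G ^ k = 0`, but
`B + G` kills the basis vectors `e_j` with `t ≤ j` and `n - t ≤ j`. Let `R` send each such `e_j`
to `e_{n-1-j}`, which lies among the first `min t (n - t)` basis vectors. As `R² = 0` and
`R B = 0`, conjugation by `1 + R` turns `G` into a nilpotent `N` with
`B + N = (1 + R) (B (1 + R) + G) (1 - R)`. In `B (1 + R) + G` the last `n - t` rows force a kernel
vector to vanish on its first `n - t` coordinates; the top rows then apply the companion
block, injective because `q(0) ≠ 0`, to the vector corrected by `R`, which recovers the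
remaining coordinates.
-/

open Matrix

theorem exists_pow_eq_zero_isUnit_add_of_mul_self_eq_zero {A : Type*} [Ring A] {B G R : A}
    {k : ℕ} (hRR : R * R = 0) (hRB : R * B = 0) (hG : G ^ k = 0)
    (hM : IsUnit (B * (1 + R) + G)) : ∃ N : A, N ^ k = 0 ∧ IsUnit (B + N) := by
  have h₁ : (1 + R) * (1 - R) = 1 := by
    rw [show (1 + R) * (1 - R) = 1 - R * R by noncomm_ring, hRR, sub_zero]
  have h₂ : (1 - R) * (1 + R) = 1 := by
    rw [show (1 - R) * (1 + R) = 1 - R * R by noncomm_ring, hRR, sub_zero]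
  let u : Aˣ := ⟨1 + R, 1 - R, h₁, h₂⟩
  refine ⟨(1 + R) * G * (1 - R), ?_, ?_⟩
  · exact (u.conj_pow G k).trans (by rw [hG, mul_zero, zero_mul])
  · have hconj : B + (1 + R) * G * (1 - R) = (1 + R) * (B * (1 + R) + G) * (1 - R) := calc
      B + (1 + R) * G * (1 - R) = (1 + R) * B * ((1 + R) * (1 - R)) + (1 + R) * G * (1 - R) := by
        rw [h₁, mul_one, add_mul 1 R B, one_mul, hRB, add_zero]
      _ = (1 + R) * (B * (1 + R) + G) * (1 - R) := by noncomm_ring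
    rw [hconj]
    exact (u.isUnit.mul hM).mul u⁻¹.isUnit

namespace Matrix

section Semiring

variable {R : Type*} [Semiring R] {n : ℕ}

variable (R n) in
def shiftMatrix (a : ℕ) : Matrix (Fin n) (Fin n) R :=
  of fun i j => if (i : ℕ) = j + a then 1 else 0

theorem shiftMatrix_mulVec (a : ℕ) (v : Fin n → R) (i : Fin n) :
    (shiftMatrix R n a *ᵥ v) i = if h : a ≤ (i : ℕ) then v ⟨i - a, by omega⟩ else 0 := by
  simp only [mulVec, dotProduct]
  split_ifs with h
  · rw [Fintype.sum_eq_single (⟨i - a, by omega⟩ : Fin n)]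
    · simp [shiftMatrix, Nat.sub_add_cancel h]
    · intro j hj
      simp only [shiftMatrix, of_apply, ite_mul, one_mul, zero_mul]
      exact if_neg fun h' => hj (Fin.ext (by simp; omega))
  · refine Finset.sum_eq_zero fun j _ => ?_
    simp only [shiftMatrix, of_apply, ite_mul, one_mul, zero_mul]
    exact if_neg (by omega)

theorem shiftMatrix_mul_shiftMatrix (a b : ℕ) :
    shiftMatrix R n a * shiftMatrix R n b = shiftMatrix R n (a + b) := by
  ext i j
  change (shiftMatrix R n a *ᵥ fun x => shiftMatrix R n b x j) i = _
  rw [shiftMatrix_mulVec]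
  simp only [shiftMatrix, of_apply]
  split_ifs <;> first | rfl | (exfalso; omega)

theorem shiftMatrix_pow (a s : ℕ) : shiftMatrix R n a ^ s = shiftMatrix R n (s * a) := by
  induction s with
  | zero => ext i j; simp [shiftMatrix, one_apply, Fin.ext_iff]
  | succ s ih => rw [pow_succ, ih, shiftMatrix_mul_shiftMatrix, Nat.succ_mul]

theorem shiftMatrix_eq_zero {a : ℕ} (h : n ≤ a) : shiftMatrix R n a = 0 := by
  ext i j
  simp only [shiftMatrix, of_apply, zero_apply]
  exact if_neg (by omega)

theorem mul_eq_zero_of_forall_lt_of_forall_le {A B : Matrix (Fin n) (Fin n) R} {t : ℕ}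
    (hA : ∀ i j : Fin n, (j : ℕ) < t → A i j = 0)
    (hB : ∀ i j : Fin n, t ≤ (i : ℕ) → B i j = 0) :
    A * B = 0 := by
  ext i j
  rw [mul_apply, zero_apply]
  refine Finset.sum_eq_zero fun x _ => ?_
  rcases lt_or_ge (x : ℕ) t with hx | hx
  · rw [hA i x hx, zero_mul]
  · rw [hB x j hx, mul_zero]

variable (R n) in
def cornerAntidiag (t : ℕ) : Matrix (Fin n) (Fin n) R :=
  of fun i j => if j = i.rev ∧ (i : ℕ) < t ∧ t ≤ (j : ℕ) then 1 else 0

variable {t : ℕ}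

theorem cornerAntidiag_apply_of_lt (i j : Fin n) (hj : (j : ℕ) < t) :
    cornerAntidiag R n t i j = 0 :=
  if_neg (by omega)

theorem cornerAntidiag_apply_of_le (i j : Fin n) (hi : t ≤ (i : ℕ)) :
    cornerAntidiag R n t i j = 0 :=
  if_neg (by omega)

theorem cornerAntidiag_mul_self : cornerAntidiag R n t * cornerAntidiag R n t = 0 :=
  mul_eq_zero_of_forall_lt_of_forall_le cornerAntidiag_apply_of_lt cornerAntidiag_apply_of_le

theorem cornerAntidiag_mulVec (v : Fin n → R) (i : Fin n) :
    (cornerAntidiag R n t *ᵥ v) i =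
      if (i : ℕ) < t ∧ t ≤ (i.rev : ℕ) then v i.rev else 0 := by
  simp only [mulVec, dotProduct, cornerAntidiag, of_apply, ite_mul, one_mul, zero_mul]
  rw [Fintype.sum_eq_single i.rev fun j hj => if_neg fun h => hj h.1]
  simp

end Semiring

section Ring

variable {R : Type*} [Ring R] {n t : ℕ}

variable (n t) in
def companionBlock (q : Polynomial R) : Matrix (Fin n) (Fin n) R :=
  of fun i j =>
    if (i : ℕ) < t ∧ (j : ℕ) < t then
      (if (i : ℕ) = (j : ℕ) + 1 then 1 else 0) + (if (j : ℕ) = t - 1 then -q.coeff i else 0)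
    else 0

theorem companionBlock_apply_of_le (q : Polynomial R) (i j : Fin n) (hi : t ≤ (i : ℕ)) :
    companionBlock n t q i j = 0 :=
  if_neg (by omega)

theorem companionBlock_mulVec_apply_of_le (q : Polynomial R) (w : Fin n → R) (i : Fin n)
    (hi : t ≤ (i : ℕ)) : (companionBlock n t q *ᵥ w) i = 0 := by
  simp [mulVec, dotProduct, companionBlock_apply_of_le q i _ hi]

theorem companionBlock_mulVec_apply (q : Polynomial R) (htn : t ≤ n) (w : Fin n → R) (i : Fin n)
    (hi : (i : ℕ) < t) :
    (companionBlock n t q *ᵥ w) i =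
      (shiftMatrix R n 1 *ᵥ w) i - q.coeff i * w ⟨t - 1, by omega⟩ := by
  have hentry : ∀ j, companionBlock n t q i j =
      shiftMatrix R n 1 i j + if j = ⟨t - 1, by omega⟩ then -q.coeff i else 0 := by
    intro j
    simp only [companionBlock, shiftMatrix, of_apply, Fin.ext_iff]
    split_ifs <;> first | (exfalso; omega) | simp
  simp only [mulVec, dotProduct, hentry, add_mul, Finset.sum_add_distrib, ite_mul, zero_mul,
    Finset.sum_ite_eq', Finset.mem_univ, if_true, neg_mul, sub_eq_add_neg]

theorem eq_zero_of_companionBlock_mulVec_eq_zero [NoZeroDivisors R] {q : Polynomial R}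
    (hq0 : q.coeff 0 ≠ 0) (htn : t ≤ n) {w : Fin n → R} (hw : companionBlock n t q *ᵥ w = 0)
    (i : Fin n) (hi : (i : ℕ) < t) : w i = 0 := by
  set l : Fin n := ⟨t - 1, by omega⟩
  have hrow : ∀ j : Fin n, (j : ℕ) < t → (shiftMatrix R n 1 *ᵥ w) j = q.coeff j * w l :=
    fun j hj => sub_eq_zero.mp <|
      (companionBlock_mulVec_apply q htn w j hj).symm.trans (congrFun hw j)
  have hlast : w l = 0 := by
    have h0 := hrow ⟨0, by omega⟩ (by simp; omega)
    rw [shiftMatrix_mulVec, dif_neg (by simp)] at h0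
    exact (mul_eq_zero.mp h0.symm).resolve_left hq0
  rcases eq_or_lt_of_le (Nat.le_sub_one_of_lt hi) with hi' | hi'
  · rwa [show i = l from Fin.ext hi']
  · have h := hrow ⟨i + 1, by omega⟩ (by simp; omega)
    rw [shiftMatrix_mulVec, dif_pos (by simp), hlast, mul_zero] at h
    simpa using h

end Ring

theorem isUnit_companionBlock_mul_add_shiftMatrix {K : Type*} [Field K] {n t : ℕ}
    {q : Polynomial K} (hq0 : q.coeff 0 ≠ 0) (htn : t ≤ n) :
    IsUnit (companionBlock n t q * (1 + cornerAntidiag K n t) + shiftMatrix K n t) := by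
  rw [← mulVec_injective_iff_isUnit, ← coe_mulVecLin, injective_iff_map_eq_zero]
  intro v hv
  set w := v + cornerAntidiag K n t *ᵥ v
  have hrow : ∀ i, (companionBlock n t q *ᵥ w) i + (shiftMatrix K n t *ᵥ v) i = 0 := by
    intro i
    simpa [w, add_mulVec, mulVec_mulVec, mulVec_add, add_assoc] using congrFun hv i
  have hhead : ∀ j : Fin n, (j : ℕ) + t < n → v j = 0 := by
    intro j hj
    have h := hrow ⟨j + t, hj⟩
    rw [companionBlock_mulVec_apply_of_le q w _ (by simp), zero_add, shiftMatrix_mulVec,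
      dif_pos (by simp)] at h
    simpa using h
  have hw : ∀ i : Fin n, (i : ℕ) < t → w i = 0 := by
    refine eq_zero_of_companionBlock_mulVec_eq_zero hq0 htn (funext fun i => ?_)
    by_cases hi : (i : ℕ) < t
    · simpa [shiftMatrix_mulVec, dif_neg (show ¬t ≤ (i : ℕ) by omega)] using hrow i
    · exact companionBlock_mulVec_apply_of_le q w i (by omega)
  funext j
  by_cases hj : (j : ℕ) + t < n
  · exact hhead j hj
  by_cases hjt : (j : ℕ) < t
  · have h := hw j hjt
    simp only [w, Pi.add_apply, cornerAntidiag_mulVec, Fin.val_rev] at h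
    rwa [if_neg (by omega), add_zero] at h
  · have h := hw j.rev (by simp; omega)
    simp only [w, Pi.add_apply, cornerAntidiag_mulVec, Fin.rev_rev, Fin.val_rev] at h
    rwa [if_pos (by omega), hhead j.rev (by simp; omega), zero_add] at h

end Matrix

theorem exists_nilpotent_add_companion_block_isUnit_general
    (F : Type*) [Field F] (n k t : ℕ) (hk : 1 ≤ k)
    (htn : t ≤ n)
    (q : Polynomial F) (hq0 : q.coeff 0 ≠ 0)
    (hcond : n - t ≤ t * (k - 1))
    (B : Matrix (Fin n) (Fin n) F)
    (hB : B = Matrix.of fun i j : Fin n =>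
      if (i : ℕ) < t ∧ (j : ℕ) < t then
        (if (i : ℕ) = (j : ℕ) + 1 then 1 else 0)
          + (if (j : ℕ) = t - 1 then -q.coeff i else 0)
      else 0) :
    ∃ N : Matrix (Fin n) (Fin n) F, N ^ k = 0 ∧ IsUnit (B + N) := by
  obtain rfl : B = companionBlock n t q := hB
  have hnk : n ≤ k * t := by
    obtain ⟨k, rfl⟩ := Nat.exists_eq_add_of_le' hk
    rw [Nat.add_sub_cancel] at hcond
    rw [Nat.succ_mul, Nat.mul_comm]
    omega
  refine exists_pow_eq_zero_isUnit_add_of_mul_self_eq_zero cornerAntidiag_mul_self ?_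
    (by rw [shiftMatrix_pow, shiftMatrix_eq_zero hnk])
    (isUnit_companionBlock_mul_add_shiftMatrix hq0 htn)
  exact mul_eq_zero_of_forall_lt_of_forall_le cornerAntidiag_apply_of_lt
    (companionBlock_apply_of_le q)

/-- Let `q(x) = x^t + a_{t-1}x^{t-1} + ⋯ + a_0 ∈ F[x]` be monic of degree `t ≥ 1` with
`q(0) = a_0 ≠ 0`, and let `B ∈ Mₙ(F)` (with `n ≥ 2`, `k ≥ 1`, `t ≤ n`) be the
block-diagonal matrix whose top-left `t × t` block is the companion matrix `C(q)`
(subdiagonal entries `1`, last column `(-a_0, …, -a_{t-1})ᵀ`, all other entries `0`)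
and whose remaining `(n-t) × (n-t)` block is zero. If `n - t ≤ t * (k - 1)`, then
there exists `N_B ∈ Mₙ(F)` with `N_B ^ k = 0` such that `B + N_B` is invertible. -/
theorem exists_nilpotent_add_companion_block_isUnit
    (F : Type*) [Field F] (n k t : ℕ) (hn : 2 ≤ n) (hk : 1 ≤ k)
    (ht : 1 ≤ t) (htn : t ≤ n)
    (q : Polynomial F) (hq : q.Monic) (hdeg : q.natDegree = t) (hq0 : q.coeff 0 ≠ 0)
    (hcond : n - t ≤ t * (k - 1))
    (B : Matrix (Fin n) (Fin n) F)
    (hB : B = Matrix.of fun i j : Fin n =>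
      if (i : ℕ) < t ∧ (j : ℕ) < t then
        (if (i : ℕ) = (j : ℕ) + 1 then 1 else 0)
          + (if (j : ℕ) = t - 1 then -q.coeff i else 0)
      else 0) :
    ∃ N : Matrix (Fin n) (Fin n) F, N ^ k = 0 ∧ IsUnit (B + N) :=
  exists_nilpotent_add_companion_block_isUnit_general F n k t hk htn q hq0 hcond B hB
end

section
/- Let F be a field and n ≥ 2. Every nonzero matrix A ∈ M_n(F) can be written as A = U + N, where U ∈ M_n(F) is invertible and N ∈ M_n(F) is nilpotent (i.e., N^n = 0). In other words, the matrix ring M_n(F) over any field is a fine ring. -/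
open Matrix

/-- A strictly upper triangular `n × n` matrix satisfies `N ^ n = 0`. -/
lemma strictUpper_pow_eq_zero {F : Type*} [Field F] {n : ℕ}
    (N : Matrix (Fin n) (Fin n) F) (h : ∀ i j : Fin n, (j : ℕ) ≤ (i : ℕ) → N i j = 0) :
    N ^ n = 0 := by
  have key : ∀ k : ℕ, ∀ i j : Fin n, (j : ℕ) < (i : ℕ) + k → (N ^ k) i j = 0 := by
    intro k
    induction k with
    | zero =>
      intro i j hij
      have hne : i ≠ j := by
        intro hh; subst hh; omega
      simp [Matrix.one_apply, hne]
    | succ k ih =>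
      intro i j hij
      rw [pow_succ, Matrix.mul_apply]
      apply Finset.sum_eq_zero
      intro m _
      by_cases hm : (m : ℕ) < (i : ℕ) + k
      · rw [ih i m hm, zero_mul]
      · have : (j : ℕ) ≤ (m : ℕ) := by omega
        rw [h m j this, mul_zero]
  ext i j
  have := key n i j (by omega)
  simp [this]

/-- If column `0` of `B` is the last standard basis vector, then `B` is a unit plus
a strictly upper triangular matrix. -/
lemma fine_aux {F : Type*} [Field F] (m : ℕ) (B : Matrix (Fin (m + 2)) (Fin (m + 2)) F)
    (hB : ∀ i, B i 0 = if i = Fin.last (m + 1) then 1 else 0) :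
    ∃ U N : Matrix (Fin (m + 2)) (Fin (m + 2)) F,
      IsUnit U ∧ N ^ (m + 2) = 0 ∧ B = U + N := by
  classical
  set U : Matrix (Fin (m + 2)) (Fin (m + 2)) F := fun i j =>
    if j = 0 then (if i = Fin.last (m + 1) then 1 else 0)
    else if (j : ℕ) ≤ (i : ℕ) then B i j
    else if (i : ℕ) + 1 = (j : ℕ) then 1 else 0 with hU
  refine ⟨U, B - U, ?_, ?_, by abel⟩
  · -- `U` is a unit
    -- permuting the columns of `U` by `finRotate` yields a lower triangular matrix
    -- with unit diagonal
    set V : Matrix (Fin (m + 2)) (Fin (m + 2)) F := U.submatrix id (finRotate (m + 2)) with hV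
    have hVlow : V.BlockTriangular OrderDual.toDual := by
      intro i j hij
      have hij' : (i : ℕ) < (j : ℕ) := hij
      by_cases hjl : j = Fin.last (m + 1)
      · have : i ≠ Fin.last (m + 1) := by
          intro hh; subst hh; subst hjl; omega
        simp only [hV, Matrix.submatrix_apply, id_eq]
        simp [hjl, hU, this]
      · have hjlt : (j : ℕ) < m + 1 := by
          have := j.isLt
          rcases lt_or_eq_of_le (Nat.lt_succ_iff.mp j.isLt) with h' | h'
          · exact h'
          · exact absurd (Fin.ext h') hjl
        have hval : ((j + 1 : Fin (m + 2)) : ℕ) = (j : ℕ) + 1 := by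
          rw [Fin.val_add_one_of_lt]
          exact Fin.lt_last_iff_ne_last.mpr hjl
        have hne0 : (j + 1 : Fin (m + 2)) ≠ 0 := by
          intro hh
          have := congrArg Fin.val hh
          rw [hval] at this
          simp at this
        simp only [hV, Matrix.submatrix_apply, id_eq, finRotate_succ_apply]
        simp only [hU]
        rw [if_neg hne0, if_neg (by omega), if_neg (by omega)]
    have hVdiag : ∀ i, V i i = 1 := by
      intro i
      by_cases hil : i = Fin.last (m + 1)
      · simp only [hV, Matrix.submatrix_apply, id_eq]
        simp [hil, hU]
      · have hval : ((i + 1 : Fin (m + 2)) : ℕ) = (i : ℕ) + 1 := by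
          rw [Fin.val_add_one_of_lt]
          exact Fin.lt_last_iff_ne_last.mpr hil
        have hne0 : (i + 1 : Fin (m + 2)) ≠ 0 := by
          intro hh
          have := congrArg Fin.val hh
          rw [hval] at this
          simp at this
        simp only [hV, Matrix.submatrix_apply, id_eq, finRotate_succ_apply]
        simp only [hU]
        rw [if_neg hne0, if_neg (by omega), if_pos (by omega)]
    have hVdet : V.det = 1 := by
      rw [Matrix.det_of_lowerTriangular V hVlow]
      simp [hVdiag]
    have hdet : (Equiv.Perm.sign (finRotate (m + 2)) : F) * U.det = 1 := by
      rw [← Matrix.det_permute' (finRotate (m + 2)) U]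
      exact hVdet
    have hUdet : U.det ≠ 0 := by
      intro h0
      rw [h0, mul_zero] at hdet
      exact zero_ne_one hdet
    exact (Matrix.isUnit_iff_isUnit_det U).mpr (isUnit_iff_ne_zero.mpr hUdet)
  · -- `B - U` is strictly upper triangular
    apply strictUpper_pow_eq_zero
    intro i j hij
    by_cases hj : j = 0
    · subst hj
      simp only [Matrix.sub_apply]
      simp [hU, hB]
    · simp only [Matrix.sub_apply]
      simp only [hU]
      rw [if_neg hj, if_pos hij, sub_self]

/-- For any field `F` and `n ≥ 2`, every nonzero matrix `A ∈ Mₙ(F)` can be written as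
`A = U + N` with `U` invertible and `N` nilpotent (`N ^ n = 0`); i.e. the matrix ring
`Mₙ(F)` is a fine ring. -/
theorem matrix_ring_is_fine
    (F : Type*) [Field F] (n : ℕ) (hn : 2 ≤ n)
    (A : Matrix (Fin n) (Fin n) F) (hA : A ≠ 0) :
    ∃ U N : Matrix (Fin n) (Fin n) F, IsUnit U ∧ N ^ n = 0 ∧ A = U + N := by
  classical
  by_cases hex : ∃ v : Fin n → F, LinearIndependent F ![v, A.mulVec v]
  · -- main case : some `v` with `v, Av` linearly independent
    obtain ⟨m, rfl⟩ : ∃ m, n = m + 2 := ⟨n - 2, by omega⟩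
    obtain ⟨v, hLI⟩ := hex
    set w : Fin (m + 2) → F := A.mulVec v with hw
    have hvw : v ≠ w := by
      intro hh
      have := hLI.injective (a₁ := 0) (a₂ := 1) (by
        show ![v, w] 0 = ![v, w] 1
        simp [hh])
      simp at this
    -- extend `{v, w}` to a basis
    have hs : LinearIndepOn F id (Set.range ![v, w]) :=
      (linearIndepOn_id_range_iff hLI.injective).mpr hLI
    set t := hs.extend (Set.subset_univ _) with ht
    have hvt : v ∈ t := hs.subset_extend _ ⟨0, rfl⟩
    have hwt : w ∈ t := hs.subset_extend _ ⟨1, rfl⟩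
    set b : Module.Basis t F (Fin (m + 2) → F) := Module.Basis.extend hs with hb
    have : Fintype t := FiniteDimensional.fintypeBasisIndex b
    have hcard : Fintype.card t = m + 2 := by
      have h1 : Module.finrank F (Fin (m + 2) → F) = Fintype.card t :=
        Module.finrank_eq_card_basis b
      rw [Module.finrank_fin_fun] at h1
      omega
    set xv : t := ⟨v, hvt⟩ with hxv
    set xw : t := ⟨w, hwt⟩ with hxw
    have hxvw : xv ≠ xw := fun hh => hvw (congrArg Subtype.val hh)
    set e0 : Fin (m + 2) ≃ t := (Fintype.equivFinOfCardEq hcard).symm with he0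
    set e1 : Fin (m + 2) ≃ t := e0.trans (Equiv.swap (e0 0) xv) with he1
    have he1v : e1 0 = xv := by simp [he1]
    set e2 : Fin (m + 2) ≃ t := e1.trans (Equiv.swap (e1 (Fin.last (m + 1))) xw) with he2
    have hlast0 : Fin.last (m + 1) ≠ (0 : Fin (m + 2)) := by
      intro hh
      have := congrArg Fin.val hh
      simp [Fin.last] at this
    have he2w : e2 (Fin.last (m + 1)) = xw := by simp [he2]
    have he2v : e2 0 = xv := by
      have h1 : e1 (Fin.last (m + 1)) ≠ xv := by
        rw [← he1v]
        exact fun hh => hlast0 (e1.injective hh)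
      simp only [he2, Equiv.trans_apply, he1v]
      exact Equiv.swap_apply_of_ne_of_ne (Ne.symm h1) hxvw
    set b' : Module.Basis (Fin (m + 2)) F (Fin (m + 2) → F) := b.reindex e2.symm with hb'
    have hb'0 : b' 0 = v := by
      rw [hb', Module.Basis.reindex_apply, Equiv.symm_symm, he2v, hb, Module.Basis.extend_apply_self]
    have hb'l : b' (Fin.last (m + 1)) = w := by
      rw [hb', Module.Basis.reindex_apply, Equiv.symm_symm, he2w, hb, Module.Basis.extend_apply_self]
    -- the change-of-basis matrix
    set P : Matrix (Fin (m + 2)) (Fin (m + 2)) F :=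
      (Pi.basisFun F (Fin (m + 2))).toMatrix ⇑b' with hP
    have : Invertible P := (Pi.basisFun F (Fin (m + 2))).invertibleToMatrix b'
    have hPapp : ∀ i j, P i j = b' j i := by
      intro i j
      rw [hP, Module.Basis.toMatrix_apply, Pi.basisFun_repr]
    set Q : Matrix (Fin (m + 2)) (Fin (m + 2)) F := ⅟P with hQ
    have hPQ : P * Q = 1 := mul_invOf_self P
    have hQP : Q * P = 1 := invOf_mul_self P
    set B : Matrix (Fin (m + 2)) (Fin (m + 2)) F := Q * A * P with hB
    have hcol : ∀ i, (A * P) i 0 = P i (Fin.last (m + 1)) := by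
      intro i
      rw [Matrix.mul_apply, hPapp i (Fin.last (m + 1)), hb'l, hw]
      simp only [Matrix.mulVec, dotProduct]
      exact Finset.sum_congr rfl fun k _ => by rw [hPapp k 0, hb'0]
    have hBcol : ∀ i, B i 0 = if i = Fin.last (m + 1) then 1 else 0 := by
      intro i
      have : B i 0 = (Q * P) i (Fin.last (m + 1)) := by
        rw [hB, Matrix.mul_assoc, Matrix.mul_apply, Matrix.mul_apply]
        exact Finset.sum_congr rfl fun k _ => by rw [hcol k]
      rw [this, hQP, Matrix.one_apply]
    obtain ⟨U, N, hU, hN, hBUN⟩ := fine_aux m B hBcol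
    refine ⟨P * U * Q, P * N * Q, ?_, ?_, ?_⟩
    · exact ((isUnit_of_invertible P).mul hU).mul (isUnit_of_invertible Q)
    · have hconj : ∀ k : ℕ, (P * N * Q) ^ k = P * N ^ k * Q := by
        intro k
        induction k with
        | zero => rw [pow_zero, pow_zero, Matrix.mul_one, hPQ]
        | succ k ih =>
          rw [pow_succ, ih, pow_succ]
          simp only [Matrix.mul_assoc]
          rw [← Matrix.mul_assoc Q P, hQP, Matrix.one_mul]
      rw [hconj, hN, Matrix.mul_zero, Matrix.zero_mul]
    · have hA' : A = P * B * Q := by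
        rw [hB]
        simp only [Matrix.mul_assoc]
        rw [← Matrix.mul_assoc P Q, hPQ, Matrix.one_mul, Matrix.mul_one]
      rw [hA', hBUN, Matrix.mul_add, Matrix.add_mul]
  · -- degenerate case : `A` is a nonzero scalar matrix
    push_neg at hex
    have key : ∀ v : Fin n → F, v ≠ 0 → ∃ c : F, A.mulVec v = c • v := by
      intro v hv
      have h2 := hex v
      rw [linearIndependent_fin2] at h2
      push_neg at h2
      simp only [Matrix.cons_val_one, Matrix.head_cons, Matrix.cons_val_zero] at h2
      by_cases hAv : A.mulVec v = 0
      · exact ⟨0, by rw [hAv, zero_smul]⟩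
      · obtain ⟨a, ha⟩ := h2 hAv
        have ha0 : a ≠ 0 := by
          intro hh; rw [hh, zero_smul] at ha; exact hv ha.symm
        refine ⟨a⁻¹, ?_⟩
        have h3 : a⁻¹ • (a • A.mulVec v) = a⁻¹ • v := by rw [ha]
        rwa [smul_smul, inv_mul_cancel₀ ha0, one_smul] at h3
    have hsingle : ∀ i : Fin n, (Pi.single i (1 : F) : Fin n → F) ≠ 0 := by
      intro i hh
      have := congrFun hh i
      simp at this
    choose c hc using fun i : Fin n => key (Pi.single i 1) (hsingle i)
    have hij : ∀ i j : Fin n, A i j = if i = j then c j else 0 := by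
      intro i j
      have h1 := congrFun (hc j) i
      rw [Matrix.mulVec_single] at h1
      simp only [MulOpposite.op_one, one_smul, Matrix.col_apply] at h1
      rw [h1, Pi.smul_apply, Pi.single_apply, smul_eq_mul]
      by_cases hh : i = j <;> simp [hh]
    have hcconst : ∀ i j : Fin n, c i = c j := by
      intro i j
      by_cases hijeq : i = j
      · rw [hijeq]
      · have hu : (Pi.single i (1 : F) + Pi.single j 1 : Fin n → F) ≠ 0 := by
          intro hh
          have := congrFun hh i
          simp [Pi.single_apply, hijeq] at this
        obtain ⟨d, hd⟩ := key _ hu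
        rw [Matrix.mulVec_add, hc i, hc j] at hd
        have hdi := congrFun hd i
        have hdj := congrFun hd j
        simp [Pi.single_apply, hijeq, Ne.symm hijeq] at hdi hdj
        rw [hdi, hdj]
    have i0 : Fin n := ⟨0, by omega⟩
    have hAscalar : A = c i0 • (1 : Matrix (Fin n) (Fin n) F) := by
      ext i j
      rw [hij i j, Matrix.smul_apply, Matrix.one_apply, smul_eq_mul]
      by_cases hh : i = j
      · rw [if_pos hh, if_pos hh, mul_one, hcconst j i0]
      · rw [if_neg hh, if_neg hh, mul_zero]
    have hc0 : c i0 ≠ 0 := by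
      intro hh
      rw [hh, zero_smul] at hAscalar
      exact hA hAscalar
    refine ⟨A, 0, ?_, ?_, by rw [add_zero]⟩
    · rw [Matrix.isUnit_iff_isUnit_det, hAscalar]
      rw [Matrix.det_smul, Matrix.det_one, mul_one]
      exact isUnit_iff_ne_zero.mpr (pow_ne_zero _ hc0)
    · exact zero_pow (by omega)
end

section
/- Let F be a field, let n ≥ 2, fix k with 2 ≤ k ≤ n, and let 1 ≤ r_1 < r_2 < ⋯ < r_m and s_1, …, s_m be indices such that the index intervals {s_j, s_j+1, …, s_j+k−2} (for j = 1, …, m) are pairwise disjoint, are disjoint from {r_1, …, r_m}, and satisfy r_j < s_j and s_j + k − 2 ≤ n for each j. Then the matrices N_{r_1,s_1,k}, …, N_{r_m,s_m,k} ∈ M_n(F) are pairwise orthogonal (N_{r_i,s_i,k} N_{r_j,s_j,k} = 0 for i ≠ j), and consequently their sum N = ∑_{j=1}^m N_{r_j,s_j,k} satisfies N^k = 0. -/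
open Matrix

theorem Finset.sum_pow_of_pairwise_mul_eq_zero {R ι : Type*} [Semiring R] [Fintype ι]
    {M : ι → R} (h : Pairwise fun i j => M i * M j = 0) {t : ℕ} (ht : 1 ≤ t) :
    (∑ i, M i) ^ t = ∑ i, M i ^ t := by
  induction t, ht using Nat.le_induction with
  | base => simp
  | succ t ht ih =>
    rw [pow_succ, ih, Finset.sum_mul_sum]
    refine Finset.sum_congr rfl fun i _ => Finset.sum_eq_single i (fun j _ hji => ?_) (by simp)
      |>.trans (pow_succ _ _).symm
    obtain ⟨t, rfl⟩ := Nat.exists_eq_add_of_le' ht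
    rw [pow_succ, mul_assoc, h hji.symm, mul_zero]

theorem Finset.sum_range_boole_and_eq_add {R : Type*} [CommSemiring R] (P : Prop) [Decidable P]
    (s j m : ℕ) :
    ∑ x ∈ Finset.range m, (if P ∧ j = s + x then (1 : R) else 0)
      = if P ∧ s ≤ j ∧ j < s + m then 1 else 0 := by
  by_cases hP : P
  · simp only [hP, true_and]
    induction m with
    | zero => simp
    | succ m ih =>
      rw [Finset.sum_range_succ, ih]
      split_ifs <;> first | ring1 | (exfalso; omega)
  · simp [hP]

/-- The basis vector `e_c`, 1-based like `Eunit`; it is the zero vector when `c ∉ [1, n]`. -/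
def Evec (R : Type*) [Zero R] [One R] (n c : ℕ) : Fin n → R :=
  fun i => if (i : ℕ) + 1 = c then 1 else 0

theorem Matrix.mulVec_Evec_apply {R : Type*} [NonAssocSemiring R] {n c : ℕ}
    (M : Matrix (Fin n) (Fin n) R) (hc : 1 ≤ c) (hcn : c ≤ n) (i : Fin n) :
    (M *ᵥ Evec R n c) i = M i ⟨c - 1, by omega⟩ := by
  rw [mulVec, dotProduct, Finset.sum_eq_single ⟨c - 1, by omega⟩]
  · simp [Evec]; omega
  · intro j _ hj
    simp only [Evec, mul_ite, mul_one, mul_zero, ite_eq_right_iff]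
    exact fun h => absurd (Fin.ext (by simp; omega)) hj
  · simp

theorem Matrix.eq_zero_of_forall_mulVec_Evec {R : Type*} [NonAssocSemiring R] {n : ℕ}
    {M : Matrix (Fin n) (Fin n) R} (h : ∀ c, 1 ≤ c → c ≤ n → M *ᵥ Evec R n c = 0) : M = 0 := by
  ext i j
  simpa [mulVec_Evec_apply M (Nat.le_add_left 1 j) j.isLt] using
    congrFun (h _ (by omega) j.isLt) i

namespace Nrsk

variable {F : Type*} [Field F] {n : ℕ}

theorem apply (r s k : ℕ) (i j : Fin n) :
    Nrsk F n r s k i j =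
      (if (i : ℕ) + 1 = r ∧ (j : ℕ) + 1 = r then 1 else 0)
      + (if (i : ℕ) + 1 = s ∧ (j : ℕ) + 1 = r then 1 else 0)
      - (if (i : ℕ) + 1 = r ∧ (j : ℕ) + 1 = s + k - 2 then 1 else 0)
      - (if (i : ℕ) + 1 = s ∧ s ≤ (j : ℕ) + 1 ∧ (j : ℕ) + 1 < s + (k - 1) then 1 else 0)
      + (if (i : ℕ) = (j : ℕ) + 1 ∧ s ≤ (j : ℕ) + 1 ∧ (j : ℕ) + 1 < s + (k - 2)
          then 1 else 0) := by
  have hsub : ∀ x, ((i : ℕ) + 1 = s + x + 1 ∧ (j : ℕ) + 1 = s + x) ↔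
      ((i : ℕ) = (j : ℕ) + 1 ∧ (j : ℕ) + 1 = s + x) := fun x => by omega
  simp only [Nrsk, Eunit, Matrix.add_apply, Matrix.sub_apply, Matrix.sum_apply, of_apply, hsub,
    Finset.sum_range_boole_and_eq_add]

def support (r s k : ℕ) : Set ℕ := insert r (Set.Icc s (s + k - 2))

theorem apply_eq_zero_of_not_mem_support {r s k : ℕ} (hk : 2 ≤ k) {i j : Fin n}
    (h : (i : ℕ) + 1 ∉ support r s k ∨ (j : ℕ) + 1 ∉ support r s k) :
    Nrsk F n r s k i j = 0 := by
  simp only [support, Set.mem_insert_iff, Set.mem_Icc] at h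
  rw [apply]
  split_ifs <;> first | ring1 | (exfalso; omega)

theorem mul_eq_zero_of_disjoint {k : ℕ} (hk : 2 ≤ k) {r₁ s₁ r₂ s₂ : ℕ}
    (h : Disjoint (support r₁ s₁ k) (support r₂ s₂ k)) :
    Nrsk F n r₁ s₁ k * Nrsk F n r₂ s₂ k = 0 := by
  ext a b
  rw [mul_apply, Matrix.zero_apply]
  refine Finset.sum_eq_zero fun c _ => ?_
  by_cases hc : (c : ℕ) + 1 ∈ support r₁ s₁ k
  · rw [apply_eq_zero_of_not_mem_support hk (.inl (Set.disjoint_left.1 h hc)), mul_zero]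
  · rw [apply_eq_zero_of_not_mem_support hk (.inr hc), zero_mul]

theorem mulVec_Evec_of_not_mem_support {r s k c : ℕ} (hk : 2 ≤ k) (hc : 1 ≤ c) (hcn : c ≤ n)
    (h : c ∉ support r s k) : Nrsk F n r s k *ᵥ Evec F n c = 0 := by
  funext a
  rw [mulVec_Evec_apply _ hc hcn]
  exact apply_eq_zero_of_not_mem_support hk (.inr (by simpa [Nat.sub_add_cancel hc]))

section Nilpotent

variable {r s k : ℕ} (hk : 2 ≤ k) (hr : 1 ≤ r) (hrs : r < s) (hsn : s + k - 2 ≤ n)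
include hk hr hrs hsn

theorem mulVec_Evec_left : Nrsk F n r s k *ᵥ Evec F n r = Evec F n r + Evec F n s := by
  funext a
  rw [mulVec_Evec_apply _ hr (by omega), apply]
  simp only [Pi.add_apply, Evec]
  split_ifs <;> first | ring1 | (exfalso; omega)

theorem mulVec_Evec_add {i : ℕ} (hi : i + 3 ≤ k) :
    Nrsk F n r s k *ᵥ Evec F n (s + i) = Evec F n (s + (i + 1)) - Evec F n s := by
  funext a
  rw [mulVec_Evec_apply _ (by omega) (by omega), apply]
  simp only [Pi.sub_apply, Evec]
  split_ifs <;> first | ring1 | (exfalso; omega)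

theorem mulVec_Evec_last :
    Nrsk F n r s k *ᵥ Evec F n (s + (k - 2)) = -(Evec F n r + Evec F n s) := by
  funext a
  rw [mulVec_Evec_apply _ (by omega) (by omega), apply]
  simp only [Pi.neg_apply, Pi.add_apply, Evec]
  split_ifs <;> first | ring1 | (exfalso; omega)

theorem pow_mulVec_chain_eq_zero (t : ℕ) {i : ℕ} (hi : i ≤ k - 2) (ht : k - 1 ≤ i + t) :
    Nrsk F n r s k ^ t *ᵥ (Evec F n r + Evec F n (s + i)) = 0 := by
  induction t generalizing i with
  | zero => omega
  | succ t ih =>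
    rw [pow_succ, ← mulVec_mulVec, mulVec_add, mulVec_Evec_left hk hr hrs hsn]
    rcases lt_or_eq_of_le hi with hi | rfl
    · rw [mulVec_Evec_add hk hr hrs hsn (by omega), add_add_sub_cancel]
      exact ih (by omega) (by omega)
    · rw [mulVec_Evec_last hk hr hrs hsn, add_neg_cancel, mulVec_zero]

theorem pow_eq_zero : Nrsk F n r s k ^ k = 0 := by
  have hpow : Nrsk F n r s k ^ k = Nrsk F n r s k ^ (k - 1) * Nrsk F n r s k := by
    rw [← pow_succ, Nat.sub_add_cancel (by omega)]
  have hleft : Nrsk F n r s k ^ k *ᵥ Evec F n r = 0 := by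
    rw [hpow, ← mulVec_mulVec, mulVec_Evec_left hk hr hrs hsn, ← add_zero s]
    exact pow_mulVec_chain_eq_zero hk hr hrs hsn _ (by omega) (by omega)
  refine eq_zero_of_forall_mulVec_Evec fun c hc hcn => ?_
  by_cases hcr : c = r
  · exact hcr ▸ hleft
  by_cases hcs : s ≤ c ∧ c ≤ s + k - 2
  · obtain ⟨i, rfl⟩ := Nat.exists_eq_add_of_le hcs.1
    rw [← add_sub_cancel_left (Evec F n r) (Evec F n (s + i)), mulVec_sub, hleft, sub_zero]
    exact pow_mulVec_chain_eq_zero hk hr hrs hsn _ (by omega) (by omega)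
  · rw [hpow, ← mulVec_mulVec,
      mulVec_Evec_of_not_mem_support hk hc hcn (by simp [support, hcr, hcs]),
      mulVec_zero]

end Nilpotent

end Nrsk

theorem Nrsk_pairwise_orthogonal_sum_nilpotent_general
    (F : Type*) [Field F] (n k m : ℕ) (hk : 2 ≤ k)
    (r s : Fin m → ℕ)
    (hr1 : ∀ j, 1 ≤ r j) (hrmono : StrictMono r)
    (hrs : ∀ j, r j < s j) (hsn : ∀ j, s j + k - 2 ≤ n)
    (hdisj : ∀ i j, i ≠ j →
      ∀ x, (s i ≤ x ∧ x ≤ s i + k - 2) → ¬ (s j ≤ x ∧ x ≤ s j + k - 2))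
    (hdisjr : ∀ i j, ∀ x, (s i ≤ x ∧ x ≤ s i + k - 2) → x ≠ r j) :
    (∀ i j, i ≠ j → Nrsk F n (r i) (s i) k * Nrsk F n (r j) (s j) k = 0) ∧
      (∑ j, Nrsk F n (r j) (s j) k) ^ k = 0 := by
  have horth : ∀ i j, i ≠ j → Nrsk F n (r i) (s i) k * Nrsk F n (r j) (s j) k = 0 := by
    refine fun i j hij => Nrsk.mul_eq_zero_of_disjoint hk (Set.disjoint_left.2 fun x hi hj => ?_)
    rcases hi with rfl | hi <;> rcases hj with hj | hj
    · exact hij (hrmono.injective hj)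
    · exact hdisjr j i _ hj rfl
    · exact hdisjr i j x hi hj
    · exact hdisj i j hij x hi hj
  refine ⟨horth, ?_⟩
  rw [Finset.sum_pow_of_pairwise_mul_eq_zero horth (by omega)]
  exact Finset.sum_eq_zero fun j _ => Nrsk.pow_eq_zero hk (hr1 j) (hrs j) (hsn j)

/-- Let `n ≥ 2`, `2 ≤ k ≤ n`, and let `1 ≤ r₁ < ⋯ < r_m` and `s₁, …, s_m` be indices such
that the intervals `{sⱼ, …, sⱼ + k - 2}` are pairwise disjoint, disjoint from
`{r₁, …, r_m}`, and satisfy `rⱼ < sⱼ` and `sⱼ + k - 2 ≤ n` for each `j`. Then the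
matrices `N_{rⱼ,sⱼ,k}` are pairwise orthogonal, and consequently their sum `N` satisfies
`N ^ k = 0`. -/
theorem Nrsk_pairwise_orthogonal_sum_nilpotent
    (F : Type*) [Field F] (n k m : ℕ) (hn : 2 ≤ n) (hk : 2 ≤ k) (hkn : k ≤ n)
    (r s : Fin m → ℕ)
    (hr1 : ∀ j, 1 ≤ r j) (hrmono : StrictMono r)
    (hrs : ∀ j, r j < s j) (hsn : ∀ j, s j + k - 2 ≤ n)
    (hdisj : ∀ i j, i ≠ j →
      ∀ x, (s i ≤ x ∧ x ≤ s i + k - 2) → ¬ (s j ≤ x ∧ x ≤ s j + k - 2))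
    (hdisjr : ∀ i j, ∀ x, (s i ≤ x ∧ x ≤ s i + k - 2) → x ≠ r j) :
    (∀ i j, i ≠ j → Nrsk F n (r i) (s i) k * Nrsk F n (r j) (s j) k = 0) ∧
      (∑ j, Nrsk F n (r j) (s j) k) ^ k = 0 :=
  Nrsk_pairwise_orthogonal_sum_nilpotent_general F n k m hk r s hr1 hrmono hrs hsn hdisj hdisjr
end
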